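/- arXiv:0708.1586 — 8 statements merged into one kernel-verified Lean document; each statement's English description precedes it below -/
import Mathlib

section
/- Let V and T̂ be finite-dimensional real vector spaces and let ω̂ be a nonvanishing T̂-valued (k+1)-form on V. Then ω̂ admits no isotropic subspace of V of codimension strictly less than k. In particular, if ω̂ is polylagrangian of rank N then N ≥ k. -/
open Module

/-- `L` is a polylagrangian subspace for the `T`-valued `(k+1)`-form `ω`:
the image of `L` under contraction `v ↦ i_v ω` is exactly the space of `T`-valued
`k`-forms vanishing whenever one argument lies in `L` (the canonical copy of
`(Λ^k L^⊥) ⊗ T` in finite dimension). -/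
def IsPolyLag {V T : Type*} [AddCommGroup V] [Module ℝ V] [AddCommGroup T] [Module ℝ T]
    {k : ℕ} (ω : V [⋀^Fin (k+1)]→ₗ[ℝ] T) (L : Submodule ℝ V) : Prop :=
  ∀ α : V [⋀^Fin k]→ₗ[ℝ] T,
    (∃ v ∈ L, ∀ x : Fin k → V, ω (Fin.cons v x) = α x)
      ↔ ∀ (x : Fin k → V) (i : Fin k), x i ∈ L → α x = 0

/-! Split `V = L ⊕ W`, so that `dim W` is the codimension of `L`, and expand `ω (w + l)`
multilinearly. A term with more than `dim W` arguments in `W` has linearly dependent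
arguments; any other term has at least two arguments in `L` and vanishes by isotropy.
A polylagrangian subspace is isotropic because `i_v ω` vanishes on `L` for `v ∈ L`. -/

theorem Equiv.Perm.exists_apply_eq_and_apply_eq {α : Type*} [DecidableEq α] {a b i j : α}
    (hab : a ≠ b) (hij : i ≠ j) : ∃ σ : Equiv.Perm α, σ a = i ∧ σ b = j := by
  set τ := Equiv.swap a i
  have hτb : i ≠ τ b := by simpa [τ] using τ.injective.ne hab
  refine ⟨τ.trans (Equiv.swap (τ b) j), ?_, ?_⟩
  · simp [τ, Equiv.swap_apply_of_ne_of_ne hτb hij]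
  · simp

namespace AlternatingMap

section Isotropic

variable {R M N ι : Type*} [Semiring R] [AddCommMonoid M] [Module R M] [AddCommGroup N]
  [Module R N]

def IsIsotropic (f : M [⋀^ι]→ₗ[R] N) (L : Submodule R M) : Prop :=
  ∀ (x : ι → M) (i j : ι), i ≠ j → x i ∈ L → x j ∈ L → f x = 0

theorem isIsotropic_of_map_eq_zero [Fintype ι] [DecidableEq ι] {f : M [⋀^ι]→ₗ[R] N}
    {L : Submodule R M} {a b : ι} (hab : a ≠ b) (h : ∀ x : ι → M, x a ∈ L → x b ∈ L → f x = 0) :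
    f.IsIsotropic L := by
  intro x i j hij hi hj
  obtain ⟨σ, rfl, rfl⟩ := Equiv.Perm.exists_apply_eq_and_apply_eq hab hij
  rw [← smul_eq_zero_iff_eq (Equiv.Perm.sign σ), ← f.map_perm]
  exact h _ hi hj

end Isotropic

variable {K M N ι : Type*} [Field K] [AddCommGroup M] [Module K M] [AddCommGroup N] [Module K N]

theorem map_eq_zero_of_finrank_lt_card (f : M [⋀^ι]→ₗ[K] N) {W : Submodule K M}
    [FiniteDimensional K W] {x : ι → M} {s : Finset ι} (hs : ∀ i ∈ s, x i ∈ W)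
    (hcard : finrank K W < s.card) : f x = 0 := by
  refine f.map_linearDependent x fun hx => hcard.not_ge ?_
  have hxs := hx.comp ((↑) : s → ι) Subtype.coe_injective
  calc s.card = finrank K (Submodule.span K (Set.range (x ∘ (↑) : s → M))) := by
        rw [finrank_span_eq_card hxs, Fintype.card_coe]
    _ ≤ finrank K W := Submodule.finrank_mono <| Submodule.span_le.mpr <| by
        rintro _ ⟨i, rfl⟩
        exact hs i i.2

theorem eq_zero_of_isIsotropic [Fintype ι] {f : M [⋀^ι]→ₗ[K] N} {L : Submodule K M}
    [FiniteDimensional K (M ⧸ L)] (hf : f.IsIsotropic L)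
    (hL : finrank K (M ⧸ L) + 1 < Fintype.card ι) : f = 0 := by
  classical
  obtain ⟨W, hLW⟩ := L.exists_isCompl
  let e := Submodule.quotientEquivOfIsCompl L W hLW
  have : FiniteDimensional K W := e.finiteDimensional
  have hW : finrank K W = finrank K (M ⧸ L) := e.finrank_eq.symm
  ext x
  choose l w hl hw hlw using Submodule.codisjoint_iff_exists_add_eq.mp hLW.codisjoint
  have hx : x = (fun i => w (x i)) + fun i => l (x i) := funext fun i => by simp [add_comm, hlw]
  rw [hx, f.map_add_univ]
  refine Finset.sum_eq_zero fun s _ => ?_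
  rcases lt_or_ge (finrank K W) s.card with hs | hs
  · exact f.map_eq_zero_of_finrank_lt_card (fun i hi => by simpa [hi] using hw (x i)) hs
  · obtain ⟨i, hi, j, hj, hij⟩ := (Finset.one_lt_card (s := sᶜ)).mp <| by
      rw [Finset.card_compl]; omega
    rw [Finset.mem_compl] at hi hj
    refine hf _ i j hij ?_ ?_ <;> rw [Finset.piecewise_eq_of_notMem _ _ _ ‹_›] <;> apply hl

end AlternatingMap

theorem IsPolyLag.map_eq_zero {V T : Type*} [AddCommGroup V] [Module ℝ V] [AddCommGroup T]
    [Module ℝ T] {n : ℕ} {ω : V [⋀^Fin (n+2)]→ₗ[ℝ] T} {L : Submodule ℝ V} (h : IsPolyLag ω L)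
    (x : Fin (n+2) → V) (hx0 : x 0 ∈ L) (hx1 : x 1 ∈ L) : ω x = 0 := by
  have hα := (h (ω.curryLeft (x 0))).mp ⟨x 0, hx0, fun _ => rfl⟩ (Fin.tail x) 0 hx1
  rwa [AlternatingMap.curryLeft_apply_apply, Matrix.vecCons, Fin.cons_self_tail] at hα

theorem stmt2_general {V T : Type*} [AddCommGroup V] [Module ℝ V] [FiniteDimensional ℝ V]
    [AddCommGroup T] [Module ℝ T] {k : ℕ}
    (ω : V [⋀^Fin (k+1)]→ₗ[ℝ] T) (hω : ω ≠ 0) :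
    (∀ L : Submodule ℝ V,
        (∀ x : Fin (k+1) → V, x 0 ∈ L → x 1 ∈ L → ω x = 0) →
        ¬ Module.finrank ℝ (V ⧸ L) < k)
      ∧ ∀ L : Submodule ℝ V, IsPolyLag ω L → k ≤ Module.finrank ℝ (V ⧸ L) := by
  cases k with
  | zero => simp
  | succ n =>
    have isotropic_codim : ∀ L : Submodule ℝ V,
        (∀ x : Fin (n+2) → V, x 0 ∈ L → x 1 ∈ L → ω x = 0) → ¬ finrank ℝ (V ⧸ L) < n + 1 :=
      fun L hL hlt => hω <| AlternatingMap.eq_zero_of_isIsotropic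
        (AlternatingMap.isIsotropic_of_map_eq_zero zero_ne_one hL) (by simpa using hlt)
    exact ⟨isotropic_codim, fun L hL => not_lt.mp (isotropic_codim L hL.map_eq_zero)⟩

/-- A nonvanishing vector-valued `(k+1)`-form admits no isotropic subspace of
codimension `< k`; in particular, a polylagrangian form of rank `N` satisfies `N ≥ k`. -/
theorem stmt2 {V T : Type*} [AddCommGroup V] [Module ℝ V] [FiniteDimensional ℝ V]
    [AddCommGroup T] [Module ℝ T] [FiniteDimensional ℝ T] {k : ℕ}
    (ω : V [⋀^Fin (k+1)]→ₗ[ℝ] T) (hω : ω ≠ 0) :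
    (∀ L : Submodule ℝ V,
        (∀ x : Fin (k+1) → V, x 0 ∈ L → x 1 ∈ L → ω x = 0) →
        ¬ Module.finrank ℝ (V ⧸ L) < k)
      ∧ ∀ L : Submodule ℝ V, IsPolyLag ω L → k ≤ Module.finrank ℝ (V ⧸ L) :=
  stmt2_general ω hω
end

section
/- Let V and T̂ be finite-dimensional real vector spaces and let ω̂ be a T̂-valued polylagrangian (k+1)-form on V of rank N with polylagrangian subspace L. Then L contains the kernel of ω̂, and moreover L contains the kernel of every projected form ω_{t*} = ⟨t*, ω̂⟩ for every nonzero t* ∈ T̂*. -/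
open Module

section Aux

variable {V T : Type*} [AddCommGroup V] [Module ℝ V] [AddCommGroup T] [Module ℝ T]

/-- If an alternating map vanishes whenever its first argument is in `L`, it
vanishes whenever any argument is in `L`. -/
lemma vanish_any {n : ℕ} (ψ : V [⋀^Fin (n+1)]→ₗ[ℝ] T) (L : Submodule ℝ V)
    (h : ∀ u ∈ L, ∀ x : Fin n → V, ψ (Fin.cons u x) = 0) :
    ∀ (x : Fin (n+1) → V) (i : Fin (n+1)), x i ∈ L → ψ x = 0 := by
  have h0 : ∀ y : Fin (n+1) → V, y 0 ∈ L → ψ y = 0 := by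
    intro y hy
    rw [← Fin.cons_self_tail y]
    exact h _ hy _
  intro x i hx
  rcases eq_or_ne i 0 with rfl | hi
  · exact h0 x hx
  · have hs : ψ (x ∘ Equiv.swap 0 i) = -ψ x := ψ.map_swap x hi.symm
    have hz : ψ (x ∘ Equiv.swap 0 i) = 0 := by
      apply h0
      show x (Equiv.swap 0 i 0) ∈ L
      rwa [Equiv.swap_apply_left]
    rw [hz] at hs
    exact neg_eq_zero.mp hs.symm

/-- An alternating map that vanishes whenever one argument belongs to a subspace of
codimension smaller than the arity is zero. -/
lemma vanish_small [FiniteDimensional ℝ V] {n : ℕ} (ψ : V [⋀^Fin n]→ₗ[ℝ] T)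
    (L : Submodule ℝ V)
    (h : ∀ (x : Fin n → V) (i : Fin n), x i ∈ L → ψ x = 0)
    (hd : finrank ℝ (V ⧸ L) < n) : ψ = 0 := by
  obtain ⟨W, hW⟩ := Submodule.exists_isCompl L
  have hfW : finrank ℝ W < n := by
    have h1 := Submodule.finrank_quotient_add_finrank L
    have h2 := Submodule.finrank_add_eq_of_isCompl hW
    omega
  ext x
  set p := W.linearProjOfIsCompl L hW.symm with hp
  have key : ∀ s : Finset (Fin n),
      ψ (fun i => if i ∈ s then (p (x i) : V) else x i) = ψ x := by
    intro s
    induction s using Finset.induction_on with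
    | empty => simp
    | @insert j s hj ih =>
      set z : Fin n → V := fun i => if i ∈ s then (p (x i) : V) else x i with hz
      have hupd : (fun i => if i ∈ insert j s then (p (x i) : V) else x i)
          = Function.update z j (p (x j) : V) := by
        funext i
        rcases eq_or_ne i j with rfl | hij
        · simp [hz]
        · simp [Function.update_of_ne hij, hz, Finset.mem_insert, hij]
      have hdiff : x j - (p (x j) : V) ∈ L := by
        have hself := Submodule.projection_add_projection_eq_self hW (x j)
        have h2 : (L.linearProjOfIsCompl W hW (x j) : V) = x j - (p (x j) : V) :=
          eq_sub_of_add_eq hself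
        rw [← h2]
        exact SetLike.coe_mem _
      have hadd : ψ (Function.update z j (x j)) =
          ψ (Function.update z j (x j - (p (x j) : V)))
            + ψ (Function.update z j (p (x j) : V)) := by
        rw [← ψ.map_update_add]
        congr 1
        rw [sub_add_cancel]
      have hzero : ψ (Function.update z j (x j - (p (x j) : V))) = 0 := by
        apply h _ j
        simp [hdiff]
      have hzj : Function.update z j (x j) = z := by
        funext i
        rcases eq_or_ne i j with rfl | hij
        · simp [hz, hj]
        · simp [Function.update_of_ne hij]
      rw [hupd]
      rw [hzj, hzero, zero_add] at hadd
      rw [← hadd]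
      exact ih
  have hxw : ψ x = ψ (fun i => (p (x i) : V)) := by
    have := key Finset.univ
    simpa using this.symm
  rw [AlternatingMap.zero_apply, hxw]
  apply ψ.map_linearDependent
  intro hli
  have hli' : LinearIndependent ℝ (fun i => p (x i)) :=
    hli.of_comp W.subtype
  have hcard := hli'.fintype_card_le_finrank
  simp only [Fintype.card_fin] at hcard
  omega

/-- Swapping the two first arguments of an alternating map changes the sign. -/
lemma swap01 {n : ℕ} (f : V [⋀^Fin (n+2)]→ₗ[ℝ] T) (a b : V) (x : Fin n → V) :
    f (Fin.cons a (Fin.cons b x)) = - f (Fin.cons b (Fin.cons a x)) := by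
  have hne : (0 : Fin (n+2)) ≠ 1 := by simp [Fin.ext_iff]
  have hs := f.map_swap (Fin.cons b (Fin.cons a x)) hne
  have hone : ∀ (c d : V) (w : Fin n → V), (Fin.cons c (Fin.cons d w) : Fin (n+2) → V) 1 = d := by
    intro c d w
    rw [← Fin.succ_zero_eq_one, Fin.cons_succ, Fin.cons_zero]
  have hcomp : (Fin.cons b (Fin.cons a x) : Fin (n+2) → V) ∘ Equiv.swap 0 1
      = Fin.cons a (Fin.cons b x) := by
    funext i
    simp only [Function.comp_apply]
    refine Fin.cases ?_ (fun i => ?_) i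
    · rw [Equiv.swap_apply_left, hone, Fin.cons_zero]
    · refine Fin.cases ?_ (fun i' => ?_) i
      · have hsw : Equiv.swap (0 : Fin (n+2)) 1 (Fin.succ 0) = 0 := by
          rw [Fin.succ_zero_eq_one, Equiv.swap_apply_right]
        rw [hsw, Fin.cons_zero, Fin.cons_succ, Fin.cons_zero]
      · have h1 : (i'.succ.succ : Fin (n+2)) ≠ 0 := Fin.succ_ne_zero _
        have h2 : (i'.succ.succ : Fin (n+2)) ≠ 1 := by
          intro hcon
          rw [← Fin.succ_zero_eq_one] at hcon
          exact (Fin.succ_ne_zero i') (Fin.succ_injective _ hcon)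
        rw [Equiv.swap_apply_of_ne_of_ne h1 h2, Fin.cons_succ, Fin.cons_succ,
          Fin.cons_succ, Fin.cons_succ]
  rw [hcomp] at hs
  rw [hs]

end Aux

/-- Main lemma: the kernel of a projected form `ω_{t}` for `t ≠ 0` is in `L`. -/
lemma mem_of_proj_ker {V T : Type*} [AddCommGroup V] [Module ℝ V] [FiniteDimensional ℝ V]
    [AddCommGroup T] [Module ℝ T] {k : ℕ} (hk : 1 ≤ k)
    (ω : V [⋀^Fin (k+1)]→ₗ[ℝ] T) (hω : ω ≠ 0)
    (L : Submodule ℝ V) (hL : IsPolyLag ω L)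
    (t : Module.Dual ℝ T) (ht : t ≠ 0)
    (v : V) (hv : ∀ x : Fin k → V, t (ω (Fin.cons v x)) = 0) : v ∈ L := by
  by_contra hvL
  rcases lt_or_ge (finrank ℝ (V ⧸ L)) k with hsmall | hbig
  · -- small codimension : ω = 0, contradiction
    have hker : ∀ u ∈ L, ∀ x : Fin k → V, ω (Fin.cons u x) = 0 := by
      intro u hu x
      have hmem : ∀ (y : Fin k → V) (i : Fin k), y i ∈ L → ω.curryLeft u y = 0 :=
        (hL (ω.curryLeft u)).1 ⟨u, hu, fun y => rfl⟩
      have hzero : ω.curryLeft u = 0 := vanish_small _ L hmem hsmall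
      have : ω.curryLeft u x = 0 := by rw [hzero]; rfl
      exact this
    have h2 : ∀ (x : Fin (k+1) → V) (i : Fin (k+1)), x i ∈ L → ω x = 0 :=
      vanish_any ω L hker
    exact hω (vanish_small ω L h2 (by omega))
  · obtain ⟨k', rfl⟩ : ∃ k', k = k' + 1 := ⟨k - 1, by omega⟩
    have hqv : L.mkQ v ≠ 0 := by
      simpa [Submodule.Quotient.mk_eq_zero] using hvL
    obtain ⟨φ', hφ'⟩ : ∃ φ' : Module.Dual ℝ (V ⧸ L), φ' (L.mkQ v) ≠ 0 := by
      by_contra hc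
      push_neg at hc
      exact hqv ((Module.forall_dual_apply_eq_zero_iff ℝ _).1 hc)
    set φ0 : Module.Dual ℝ (V ⧸ L) := (φ' (L.mkQ v))⁻¹ • φ' with hφ0def
    have hφ0 : φ0 (L.mkQ v) = 1 := by
      rw [hφ0def]
      simp only [LinearMap.smul_apply, smul_eq_mul]
      exact inv_mul_cancel₀ hφ'
    obtain ⟨u0, hu0⟩ : ∃ u0 : T, t u0 ≠ 0 := by
      by_contra hc
      push_neg at hc
      exact ht (LinearMap.ext fun u => by simp [hc u])
    set th : T := (t u0)⁻¹ • u0 with hthdef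
    have hth : t th = 1 := by
      rw [hthdef, map_smul, smul_eq_mul]
      exact inv_mul_cancel₀ hu0
    -- projection onto the kernel of φ0
    set K := LinearMap.ker φ0 with hK
    have hPmem : ∀ x : V ⧸ L,
        ((LinearMap.id : (V ⧸ L) →ₗ[ℝ] (V ⧸ L)) - φ0.smulRight (L.mkQ v)) x ∈ K := by
      intro x
      rw [hK, LinearMap.mem_ker, LinearMap.sub_apply, LinearMap.id_apply,
        LinearMap.smulRight_apply, map_sub, map_smul, smul_eq_mul, hφ0, mul_one, sub_self]
    set P : (V ⧸ L) →ₗ[ℝ] K :=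
      LinearMap.codRestrict K ((LinearMap.id : (V ⧸ L) →ₗ[ℝ] (V ⧸ L)) - φ0.smulRight (L.mkQ v))
        hPmem with hPdef
    have hPapply : ∀ x : V ⧸ L, (P x : V ⧸ L) = x - φ0 x • L.mkQ v := by
      intro x; rfl
    -- dimension of the kernel
    have hdim : k' ≤ finrank ℝ K := by
      have h1 := LinearMap.finrank_range_add_finrank_ker φ0
      have hrange : LinearMap.range φ0 = ⊤ := by
        rw [LinearMap.range_eq_top]
        intro r
        exact ⟨r • L.mkQ v, by rw [map_smul, smul_eq_mul, hφ0, mul_one]⟩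
      rw [hrange, finrank_top, finrank_self] at h1
      rw [← hK] at h1
      omega
    set bK := finBasis ℝ K with hbK
    -- dual pairs
    set hfam : Fin (k'+1) → Module.Dual ℝ (V ⧸ L) :=
      Fin.cons φ0 (fun j => (bK.coord (Fin.castLE hdim j)).comp P) with hhfam
    set yfam : Fin (k'+1) → V ⧸ L :=
      Fin.cons (L.mkQ v) (fun j => (bK (Fin.castLE hdim j) : V ⧸ L)) with hyfam
    have hPqv : P (L.mkQ v) = 0 := by
      apply Subtype.ext
      rw [hPapply, hφ0, one_smul, sub_self]
      exact (ZeroMemClass.coe_zero _).symm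
    have hkerbK : ∀ c, φ0 ((bK c : K) : V ⧸ L) = 0 := by
      intro c
      exact LinearMap.mem_ker.1 (bK c).2
    have hPbK : ∀ c, P ((bK c : K) : V ⧸ L) = bK c := by
      intro c
      apply Subtype.ext
      rw [hPapply, hkerbK, zero_smul, sub_zero]
    have hdual : ∀ i j, hfam i (yfam j) = if i = j then 1 else 0 := by
      intro i j
      refine Fin.cases ?_ (fun i' => ?_) i
      · refine Fin.cases ?_ (fun j' => ?_) j
        · simp only [hhfam, hyfam, Fin.cons_zero, hφ0]
          simp
        · simp only [hhfam, hyfam, Fin.cons_zero, Fin.cons_succ, hkerbK,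
            if_neg (Fin.succ_ne_zero j').symm]
      · refine Fin.cases ?_ (fun j' => ?_) j
        · simp only [hhfam, hyfam, Fin.cons_zero, Fin.cons_succ, LinearMap.comp_apply,
            hPqv, map_zero, if_neg (Fin.succ_ne_zero i')]
        · have hcoord : bK.coord (Fin.castLE hdim i') (bK (Fin.castLE hdim j'))
              = if Fin.castLE hdim i' = Fin.castLE hdim j' then 1 else 0 := by
            rw [Basis.coord_apply, Basis.repr_self, Finsupp.single_apply]
            simp [eq_comm]
          have hcast : (Fin.castLE hdim i' = Fin.castLE hdim j') ↔ i' = j' :=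
            (Fin.castLE_injective hdim).eq_iff
          simp only [hhfam, hyfam, Fin.cons_succ, LinearMap.comp_apply, hPbK, hcoord]
          rw [if_congr (hcast.trans (Fin.succ_inj (a := i') (b := j')).symm) rfl rfl]
    -- the alternating form
    set G : (V ⧸ L) →ₗ[ℝ] (Fin (k'+1) → ℝ) := LinearMap.pi hfam with hG
    set α₀ : V [⋀^Fin (k'+1)]→ₗ[ℝ] ℝ :=
      Matrix.detRowAlternating.compLinearMap (G ∘ₗ L.mkQ) with hα₀def
    set α : V [⋀^Fin (k'+1)]→ₗ[ℝ] T :=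
      (LinearMap.toSpanSingleton ℝ T th).compAlternatingMap α₀ with hαdef
    have hαS : ∀ (x : Fin (k'+1) → V) (i : Fin (k'+1)), x i ∈ L → α x = 0 := by
      intro x i hx
      have hzero : (G ∘ₗ L.mkQ) (x i) = 0 := by
        have : L.mkQ (x i) = 0 := by simpa [Submodule.Quotient.mk_eq_zero] using hx
        simp [this]
      simp only [hαdef, LinearMap.compAlternatingMap_apply, hα₀def,
        AlternatingMap.compLinearMap_apply]
      rw [Matrix.detRowAlternating.map_coord_zero i hzero]
      simp
    obtain ⟨u, hu, hα⟩ := (hL α).2 hαS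
    -- lift the basis vectors
    choose z hz using fun j : Fin k' =>
      L.mkQ_surjective ((bK (Fin.castLE hdim j) : K) : V ⧸ L)
    have hy : ∀ a, L.mkQ ((Fin.cons v z : Fin (k'+1) → V) a) = yfam a := by
      intro a
      refine Fin.cases ?_ (fun a' => ?_) a
      · simp [hyfam]
      · simp [hyfam, hz]
    have hα₀val : α₀ (Fin.cons v z) = 1 := by
      have hrows : (fun a => (G ∘ₗ L.mkQ) ((Fin.cons v z : Fin (k'+1) → V) a))
          = fun a i => hfam i (yfam a) := by
        funext a
        rw [LinearMap.comp_apply, hy a]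
        rfl
      have hmat : Matrix.of (fun a i => hfam i (yfam a))
          = (1 : Matrix (Fin (k'+1)) (Fin (k'+1)) ℝ) := by
        ext a i
        rw [Matrix.of_apply, hdual i a, Matrix.one_apply]
        simp [eq_comm]
      have : α₀ (Fin.cons v z) = Matrix.det (Matrix.of fun a i => hfam i (yfam a)) := by
        rw [hα₀def, AlternatingMap.compLinearMap_apply, hrows]
        rfl
      rw [this, hmat, Matrix.det_one]
    have h1 : t (α (Fin.cons v z)) = 1 := by
      rw [hαdef, LinearMap.compAlternatingMap_apply, LinearMap.toSpanSingleton_apply,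
        hα₀val, one_smul, hth]
    have h2 : α (Fin.cons v z) = ω (Fin.cons u (Fin.cons v z)) := (hα _).symm
    have h3 : ω (Fin.cons u (Fin.cons v z)) = - ω (Fin.cons v (Fin.cons u z)) :=
      swap01 ω u v z
    have h4 : t (ω (Fin.cons v (Fin.cons u z))) = 0 := hv _
    rw [h2, h3, map_neg, h4, neg_zero] at h1
    exact zero_ne_one h1

/-- A polylagrangian subspace contains the kernel of `ω` and the kernel of each
projected form `ω_{t*} = ⟨t*, ω⟩` for nonzero `t* ∈ T*`. -/
theorem stmt3 {V T : Type*} [AddCommGroup V] [Module ℝ V] [FiniteDimensional ℝ V]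
    [AddCommGroup T] [Module ℝ T] [FiniteDimensional ℝ T] {k : ℕ} (hk : 1 ≤ k)
    (ω : V [⋀^Fin (k+1)]→ₗ[ℝ] T) (hω : ω ≠ 0)
    (L : Submodule ℝ V) (hL : IsPolyLag ω L) :
    LinearMap.ker ω.curryLeft ≤ L
      ∧ ∀ t : Module.Dual ℝ T, t ≠ 0 →
          LinearMap.ker (t.compAlternatingMap ω).curryLeft ≤ L := by
  have main : ∀ t : Module.Dual ℝ T, t ≠ 0 →
      LinearMap.ker (t.compAlternatingMap ω).curryLeft ≤ L := by
    intro t ht v hvker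
    rw [LinearMap.mem_ker] at hvker
    apply mem_of_proj_ker hk ω hω L hL t ht v
    intro x
    have := congrArg (fun f => f x) (congrArg (fun m => m) hvker)
    calc t (ω (Fin.cons v x)) = ((t.compAlternatingMap ω).curryLeft v) x := rfl
      _ = 0 := by rw [hvker]; rfl
  refine ⟨?_, main⟩
  intro v hvker
  rw [LinearMap.mem_ker] at hvker
  obtain ⟨x0, hx0⟩ : ∃ x0, ω x0 ≠ 0 := by
    by_contra hc
    push_neg at hc
    exact hω (AlternatingMap.ext hc)
  obtain ⟨t, htx⟩ : ∃ t : Module.Dual ℝ T, t (ω x0) ≠ 0 := by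
    by_contra hc
    push_neg at hc
    exact hx0 ((Module.forall_dual_apply_eq_zero_iff ℝ _).1 hc)
  have ht : t ≠ 0 := by
    intro hteq
    apply htx
    rw [hteq]
    rfl
  apply main t ht
  rw [LinearMap.mem_ker]
  ext y
  calc ((t.compAlternatingMap ω).curryLeft v) y = t (ω.curryLeft v y) := rfl
    _ = 0 := by rw [hvker]; simp
end

section
/- Let V and T̂ be finite-dimensional real vector spaces with n̂ = dim T̂ ≥ 2, and let ω̂ be a T̂-valued polylagrangian (k+1)-form of rank N on V with polylagrangian subspace L. Then L equals the sum, over all nonzero t* ∈ T̂*, of the kernels of the projected forms ω_{t*} = ⟨t*, ω̂⟩; in particular L is unique. -/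
/-!
For `v ∈ L` the form `ι_v ω` vanishes on `L`, hence so does `P ∘ ι_v ω` for every endomorphism
`P` of `T`, and polylagrangianity gives `w ∈ L` with `ι_w ω = P ∘ ι_v ω`. Choose `y : T` and
functionals `t₀ t₁ ≠ 0` with `t₀ y = 1`, `t₁ y = 0` (two basis vectors and their coordinates)
and take `P = id - t₀ ⊗ y`: then `w ∈ ker ω_{t₀}` and `v - w ∈ ker ω_{t₁}`, so `L ≤ ⨆ ker ω_t`.

Conversely let `ω_t(u, ·) = 0` with `u ∉ L`. Since `ω ≠ 0` forces `dim V/L ≥ k`, there is a real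
`k`-form `β` on `V/L` with `ι_u β ≠ 0`. Its pull-back tensored with `y`, `t y = 1`, vanishes on `L`,
so it equals `ι_v ω` for some `v ∈ L`, and antisymmetry gives
`ι_u β = t ∘ ι_u ι_v ω = -t ∘ ι_v ι_u ω = 0`.
-/
open Module

namespace AlternatingMap

section CommRing

variable {R M N : Type*} [CommRing R] [AddCommGroup M] [Module R M] [AddCommGroup N] [Module R N]

theorem curryLeft_curryLeft_swap {n : ℕ} (f : M [⋀^Fin (n + 2)]→ₗ[R] N) (u v : M) :
    (f.curryLeft u).curryLeft v = -(f.curryLeft v).curryLeft u := by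
  have h := f.curryLeft_same (u + v)
  simp only [map_add, curryLeft_add, LinearMap.add_apply, curryLeft_same, zero_add,
    add_zero] at h
  exact eq_neg_of_add_eq_zero_right h

theorem map_eq_zero_of_forall_curryLeft_eq_zero {n : ℕ} (f : M [⋀^Fin (n + 1)]→ₗ[R] N)
    {L : Submodule R M} (hf : ∀ v ∈ L, f.curryLeft v = 0) (x : Fin (n + 1) → M) (i : Fin (n + 1))
    (hi : x i ∈ L) : f x = 0 := by
  have h : f (x ∘ Equiv.swap 0 i) = 0 := by
    rw [← Fin.cons_self_tail (x ∘ Equiv.swap 0 i)]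
    have := congr($(hf _ (by simpa using hi)) (Fin.tail (x ∘ Equiv.swap 0 i)))
    rwa [curryLeft_apply_apply, zero_apply] at this
  rwa [f.map_perm, smul_eq_zero_iff_eq] at h

end CommRing

section Field

variable {K V N : Type*} [Field K] [AddCommGroup V] [Module K V] [AddCommGroup N] [Module K N]

theorem eq_zero_of_finrank_quotient_lt {L : Submodule K V} [FiniteDimensional K (V ⧸ L)] {p : ℕ}
    (hp : finrank K (V ⧸ L) < p) (γ : V [⋀^Fin p]→ₗ[K] N)
    (hγ : ∀ (x : Fin p → V) (i : Fin p), x i ∈ L → γ x = 0) : γ = 0 := by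
  obtain ⟨W, hLW⟩ := L.exists_isCompl
  have hW : finrank K W < p := (Submodule.quotientEquivOfIsCompl L W hLW).finrank_eq ▸ hp
  ext x
  -- Expanding `x = l + w` along `V = L ⊕ W`, every term has an argument in `L` except `γ w`,
  -- and `w` is linearly dependent because `dim W < p`.
  have hx : x = (fun i => L.projection W hLW (x i)) + fun i => W.projection L hLW.symm (x i) :=
    funext fun i => (Submodule.projection_add_projection_eq_self hLW (x i)).symm
  rw [hx, γ.map_add_univ]
  refine Finset.sum_eq_zero fun s _ => ?_
  obtain rfl | ⟨i, hi⟩ := s.eq_empty_or_nonempty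
  · have := (Submodule.quotientEquivOfIsCompl L W hLW).finiteDimensional
    refine γ.map_linearDependent _ fun hind => hW.not_ge ?_
    simpa using (LinearIndependent.of_comp W.subtype
      (v := fun i => W.projectionOnto L hLW.symm (x i)) hind).fintype_card_le_finrank
  · exact hγ _ i (by simp [Finset.piecewise_eq_of_mem _ _ _ hi])

end Field

end AlternatingMap

section Field

variable {K W : Type*} [Field K] [AddCommGroup W] [Module K W]

theorem LinearIndependent.exists_alternatingMap_apply_ne_zero {p : ℕ} {x : Fin p → W}
    (hx : LinearIndependent K x) : ∃ β : W [⋀^Fin p]→ₗ[K] K, β x ≠ 0 := by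
  obtain ⟨π, hπ⟩ := (Submodule.span K (Set.range x)).subtype.exists_leftInverse_of_injective
    (Submodule.ker_subtype _)
  have hπx : π ∘ x = Basis.span hx := funext fun i => by
    simpa using LinearMap.congr_fun hπ ⟨x i, Submodule.subset_span (Set.mem_range_self i)⟩
  refine ⟨(Basis.span hx).det.compLinearMap π, ?_⟩
  change (Basis.span hx).det (π ∘ x) ≠ 0
  rw [hπx, Basis.det_self]
  exact one_ne_zero

theorem exists_linearIndependent_cons_of_ne_zero {m : ℕ} {u : W} (hu : u ≠ 0)
    (hm : m < finrank K W) :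
    ∃ w : Fin m → W, LinearIndependent K (Fin.cons u w : Fin (m + 1) → W) := by
  induction m with
  | zero => exact ⟨Fin.elim0, (linearIndependent_unique_iff (ι := Fin 1)).mpr (by simpa using hu)⟩
  | succ m ih =>
    obtain ⟨w, hw⟩ := ih (by omega)
    obtain ⟨y, hy⟩ := exists_linearIndependent_snoc_of_lt_finrank hw hm
    exact ⟨Fin.snoc w y, by rwa [Fin.cons_snoc_eq_snoc_cons]⟩

theorem exists_alternatingMap_curryLeft_ne_zero {m : ℕ} {u : W} (hu : u ≠ 0)
    (hm : m < finrank K W) : ∃ β : W [⋀^Fin (m + 1)]→ₗ[K] K, β.curryLeft u ≠ 0 := by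
  obtain ⟨w, hw⟩ := exists_linearIndependent_cons_of_ne_zero hu hm
  obtain ⟨β, hβ⟩ := hw.exists_alternatingMap_apply_ne_zero
  refine ⟨β, fun h => hβ ?_⟩
  have := congr($h w)
  rwa [AlternatingMap.curryLeft_apply_apply, AlternatingMap.zero_apply] at this

end Field

namespace IsPolyLag

variable {V T : Type*} [AddCommGroup V] [Module ℝ V] [AddCommGroup T] [Module ℝ T] {k : ℕ}
  {ω : V [⋀^Fin (k + 1)]→ₗ[ℝ] T} {L : Submodule ℝ V}

theorem curryLeft_map_eq_zero (hL : IsPolyLag ω L) {v : V} (hv : v ∈ L) (x : Fin k → V)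
    (i : Fin k) (hi : x i ∈ L) : ω.curryLeft v x = 0 :=
  (hL _).mp ⟨v, hv, fun _ => rfl⟩ x i hi

theorem exists_curryLeft_eq (hL : IsPolyLag ω L) {α : V [⋀^Fin k]→ₗ[ℝ] T}
    (hα : ∀ (x : Fin k → V) (i : Fin k), x i ∈ L → α x = 0) : ∃ v ∈ L, ω.curryLeft v = α := by
  obtain ⟨v, hv, hvα⟩ := (hL α).mpr hα
  exact ⟨v, hv, AlternatingMap.ext hvα⟩

theorem exists_curryLeft_eq_compAlternatingMap (hL : IsPolyLag ω L) {v : V} (hv : v ∈ L)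
    (P : T →ₗ[ℝ] T) : ∃ w ∈ L, ω.curryLeft w = P.compAlternatingMap (ω.curryLeft v) :=
  hL.exists_curryLeft_eq fun x i hi => by
    rw [LinearMap.compAlternatingMap_apply, hL.curryLeft_map_eq_zero hv x i hi, map_zero]

theorem le_ker_sup_ker (hL : IsPolyLag ω L) {t₀ t₁ : Dual ℝ T} {y : T}
    (h₀ : t₀ y = 1) (h₁ : t₁ y = 0) :
    L ≤ LinearMap.ker (t₀.compAlternatingMap ω).curryLeft ⊔
      LinearMap.ker (t₁.compAlternatingMap ω).curryLeft := by
  intro v hv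
  obtain ⟨w, hwL, hw⟩ := hL.exists_curryLeft_eq_compAlternatingMap hv (.id - t₀.smulRight y)
  have hw₀ : w ∈ LinearMap.ker (t₀.compAlternatingMap ω).curryLeft := by
    ext x
    simp [hw, h₀]
  have hvw₁ : v - w ∈ LinearMap.ker (t₁.compAlternatingMap ω).curryLeft := by
    ext x
    simp [hw, h₁]
  rw [← sub_add_cancel v w, sup_comm]
  exact Submodule.add_mem_sup hvw₁ hw₀

theorem le_iSup_ker (hL : IsPolyLag ω L) (hT : 2 ≤ finrank ℝ T) :
    L ≤ ⨆ (t : Dual ℝ T) (_ : t ≠ 0), LinearMap.ker (t.compAlternatingMap ω).curryLeft := by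
  have : FiniteDimensional ℝ T := .of_finrank_pos (by omega)
  let b := Module.finBasis ℝ T
  have hb (i : Fin (finrank ℝ T)) : b.coord i ≠ 0 := fun h => by simpa using congr($h (b i))
  let i₀ : Fin (finrank ℝ T) := ⟨0, by omega⟩
  let i₁ : Fin (finrank ℝ T) := ⟨1, by omega⟩
  have h₀ : b.coord i₀ (b i₀) = 1 := by simp
  have h₁ : b.coord i₁ (b i₀) = 0 := by simp [i₀, i₁]
  refine (hL.le_ker_sup_ker h₀ h₁).trans (sup_le ?_ ?_) <;>
    exact le_iSup₂_of_le _ (hb _) le_rfl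

theorem le_finrank_quotient [FiniteDimensional ℝ (V ⧸ L)] (hL : IsPolyLag ω L) (hω : ω ≠ 0) :
    k ≤ finrank ℝ (V ⧸ L) := by
  by_contra! hk
  have hcurry (v : V) (hv : v ∈ L) : ω.curryLeft v = 0 :=
    AlternatingMap.eq_zero_of_finrank_quotient_lt hk _ (hL.curryLeft_map_eq_zero hv)
  exact hω (AlternatingMap.eq_zero_of_finrank_quotient_lt (by omega) ω
    (ω.map_eq_zero_of_forall_curryLeft_eq_zero hcurry))

theorem ker_le [FiniteDimensional ℝ (V ⧸ L)] (hL : IsPolyLag ω L) (hk : 1 ≤ k) (hω : ω ≠ 0)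
    {t : Dual ℝ T} (ht : t ≠ 0) : LinearMap.ker (t.compAlternatingMap ω).curryLeft ≤ L := by
  obtain ⟨m, rfl⟩ := Nat.exists_eq_add_of_le' hk
  intro u hu
  by_contra huL
  obtain ⟨β, hβ⟩ := exists_alternatingMap_curryLeft_ne_zero (K := ℝ)
    (u := L.mkQ u) (by simpa using huL) (hL.le_finrank_quotient hω)
  obtain ⟨y, hy⟩ := LinearMap.surjective ht 1
  obtain ⟨v, -, hv⟩ := hL.exists_curryLeft_eq
    (α := (LinearMap.toSpanSingleton ℝ T y).compAlternatingMap (β.compLinearMap L.mkQ))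
    fun x i hi => by
      rw [LinearMap.compAlternatingMap_apply, AlternatingMap.compLinearMap_apply,
        β.map_coord_zero i (by simpa using hi), map_zero]
  have hβv : t.compAlternatingMap (ω.curryLeft v) = β.compLinearMap L.mkQ := by
    ext x
    simp [hv, hy]
  have hswap : (t.compAlternatingMap (ω.curryLeft v)).curryLeft u = 0 := by
    rw [AlternatingMap.curryLeft_compAlternatingMap, AlternatingMap.curryLeft_curryLeft_swap]
    ext x
    have h := congr($hu (Fin.cons v x))
    simp only [AlternatingMap.curryLeft_apply_apply, LinearMap.compAlternatingMap_apply,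
      AlternatingMap.neg_apply, AlternatingMap.zero_apply, map_neg, neg_eq_zero] at h ⊢
    exact h
  apply hβ
  refine AlternatingMap.compLinearMap_injective _ L.mkQ_surjective ?_
  rwa [hβv, AlternatingMap.curryLeft_compLinearMap] at hswap

theorem eq_iSup_ker [FiniteDimensional ℝ (V ⧸ L)] (hL : IsPolyLag ω L) (hk : 1 ≤ k) (hω : ω ≠ 0)
    (hT : 2 ≤ finrank ℝ T) :
    L = ⨆ (t : Dual ℝ T) (_ : t ≠ 0), LinearMap.ker (t.compAlternatingMap ω).curryLeft :=
  le_antisymm (hL.le_iSup_ker hT) (iSup₂_le fun _ ht => hL.ker_le hk hω ht)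

end IsPolyLag

theorem stmt7_general {V T : Type*} [AddCommGroup V] [Module ℝ V] [FiniteDimensional ℝ V]
    [AddCommGroup T] [Module ℝ T] {k : ℕ} (hk : 1 ≤ k)
    (hT : 2 ≤ Module.finrank ℝ T)
    (ω : V [⋀^Fin (k+1)]→ₗ[ℝ] T) (hω : ω ≠ 0)
    (L : Submodule ℝ V) (hL : IsPolyLag ω L) :
    L = ⨆ (t : Module.Dual ℝ T) (_ : t ≠ 0),
          LinearMap.ker (t.compAlternatingMap ω).curryLeft
      ∧ ∀ L' : Submodule ℝ V, IsPolyLag ω L' → L' = L := by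
  exact ⟨hL.eq_iSup_ker hk hω hT,
    fun _ hL' => (hL'.eq_iSup_ker hk hω hT).trans (hL.eq_iSup_ker hk hω hT).symm⟩

/-- For a `T`-valued polylagrangian `(k+1)`-form with `dim T ≥ 2`, the polylagrangian
subspace `L` is the sum over all nonzero `t* ∈ T*` of the kernels of the projected
forms `ω_{t*}`; in particular, `L` is unique. -/
theorem stmt7 {V T : Type*} [AddCommGroup V] [Module ℝ V] [FiniteDimensional ℝ V]
    [AddCommGroup T] [Module ℝ T] [FiniteDimensional ℝ T] {k N : ℕ} (hk : 1 ≤ k)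
    (hT : 2 ≤ Module.finrank ℝ T)
    (ω : V [⋀^Fin (k+1)]→ₗ[ℝ] T) (hω : ω ≠ 0)
    (L : Submodule ℝ V) (hL : IsPolyLag ω L) (hN : Module.finrank ℝ (V ⧸ L) = N) :
    L = ⨆ (t : Module.Dual ℝ T) (_ : t ≠ 0),
          LinearMap.ker (t.compAlternatingMap ω).curryLeft
      ∧ ∀ L' : Submodule ℝ V, IsPolyLag ω L' → L' = L :=
  stmt7_general hk hT ω hω L hL
end

section
/- Let V and T̂ be finite-dimensional real vector spaces and let ω̂ be a T̂-valued polylagrangian (k+1)-form of rank N on V, with polylagrangian subspace L. Then there exists a subspace E of V complementary to L (V = E ⊕ L) which is k-isotropic with respect to ω̂, i.e., i_{v₀} i_{v₁} ⋯ i_{v_k} ω̂ = 0 for all v₀,…,v_k ∈ E. -/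
open Module

/-!
Contracting `ω` with a vector of `L` gives a `k`-form vanishing on `L`, so `ω` vanishes as soon
as two of its arguments lie in `L`; conversely every `k`-form vanishing on `L` is such a
contraction. Fix a complement `E₀` of `L`. For `e ∈ E₀`, the form `-(k+1)⁻¹ i_e ω` pulled back
along the projection onto `E₀` vanishes on `L`, hence equals `i_{ψ e} ω` for some linear
`ψ : E₀ → L`. Expanding `ω` on the graph `E = {e + ψ e}` by multilinearity leaves only the
term without `ψ` and the `k+1` terms with one `ψ`, each equal to `-(k+1)⁻¹` times the first,
so the sum vanishes.
-/

open Finset Function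

namespace MultilinearMap

theorem map_add_eq_add_sum_update {R M N ι : Type*} [CommSemiring R] [AddCommMonoid M]
    [Module R M] [AddCommMonoid N] [Module R N] [Fintype ι] [DecidableEq ι]
    (f : MultilinearMap R (fun _ : ι => M) N) (L : Submodule R M)
    (hf : ∀ (x : ι → M) (i j : ι), i ≠ j → x i ∈ L → x j ∈ L → f x = 0)
    (a b : ι → M) (hb : ∀ i, b i ∈ L) :
    f (a + b) = f a + ∑ i, f (update a i (b i)) := by
  have hvanish : ∀ s : Finset ι, s ∉ insert ∅ (univ.image singleton) →
      f (s.piecewise b a) = 0 := by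
    intro s hs
    simp only [mem_insert, mem_image, mem_univ, true_and, not_or, not_exists] at hs
    obtain ⟨i, hi, j, hj, hij⟩ :=
      (nonempty_iff_ne_empty.2 hs.1).exists_eq_singleton_or_nontrivial.resolve_left
        fun ⟨i, h⟩ => hs.2 i h.symm
    refine hf _ i j hij ?_ ?_
    · rw [piecewise_eq_of_mem _ _ _ hi]; exact hb i
    · rw [piecewise_eq_of_mem _ _ _ hj]; exact hb j
  rw [add_comm, f.map_add_univ, ← sum_subset (subset_univ _) fun s _ => hvanish s,
    sum_insert (by simp), sum_image singleton_injective.injOn, piecewise_empty]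
  simp only [piecewise_singleton]

end MultilinearMap

namespace LinearMap

variable {R M : Type*} [Ring R] [AddCommGroup M] [Module R M] {E₀ L : Submodule R M}

def graphIn (ψ : E₀ →ₗ[R] L) : Submodule R M :=
  range (E₀.subtype + L.subtype ∘ₗ ψ)

theorem mem_graphIn {ψ : E₀ →ₗ[R] L} {x : M} :
    x ∈ ψ.graphIn ↔ ∃ e : E₀, (e : M) + ψ e = x :=
  Iff.rfl

theorem isCompl_graphIn (h : IsCompl E₀ L) (ψ : E₀ →ₗ[R] L) : IsCompl ψ.graphIn L := by
  constructor
  · rw [Submodule.disjoint_def]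
    rintro _ ⟨e, rfl⟩ hx
    have he : (e : M) ∈ L := by simpa using L.sub_mem hx (ψ e).2
    have : e = 0 := Subtype.ext (Submodule.disjoint_def.1 h.disjoint e e.2 he)
    simp [this]
  · rw [codisjoint_iff, eq_top_iff]
    intro v _
    obtain ⟨y, hy, z, hz, rfl⟩ :=
      Submodule.mem_sup.1 (h.sup_eq_top ▸ Submodule.mem_top (x := v))
    have hsplit : y + z = (y + ψ ⟨y, hy⟩) + (z - ψ ⟨y, hy⟩) := by abel
    rw [hsplit]
    exact Submodule.add_mem_sup ⟨⟨y, hy⟩, rfl⟩ (L.sub_mem hz (ψ _).2)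

end LinearMap

namespace AlternatingMap

theorem map_eq_zero_of_mem_graphIn {R M N : Type*} [CommRing R] [AddCommGroup M] [Module R M]
    [AddCommGroup N] [Module R N] {k : ℕ} (ω : M [⋀^Fin (k+1)]→ₗ[R] N)
    {E₀ L : Submodule R M}
    (hL : ∀ (x : Fin (k+1) → M) (i j : Fin (k+1)),
      i ≠ j → x i ∈ L → x j ∈ L → ω x = 0)
    (ψ : E₀ →ₗ[R] L) (c : R) (hc : ((k : R) + 1) * c = -1)
    (hψ : ∀ (e : E₀) (y : Fin k → M), (∀ j, y j ∈ E₀) →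
      ω (Matrix.vecCons (ψ e : M) y) = c • ω (Matrix.vecCons (e : M) y))
    (x : Fin (k+1) → M) (hx : ∀ i, x i ∈ ψ.graphIn) : ω x = 0 := by
  choose e he using fun i => LinearMap.mem_graphIn.1 (hx i)
  set a : Fin (k+1) → M := fun i => e i
  set b : Fin (k+1) → M := fun i => ψ (e i)
  have hab : x = a + b := funext fun i => (he i).symm
  have hψ' : ∀ i y, (∀ j, y j ∈ E₀) →
      ω (Matrix.vecCons (b i) y) = c • ω (Matrix.vecCons (a i) y) := fun i => hψ (e i)
  have hupdate : ∀ i, ω (update a i (b i)) = c • ω a := by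
    intro i
    rw [← Fin.insertNth_removeNth, map_insertNth, hψ' i (i.removeNth a) fun _ => (e _).2,
      smul_comm, ← map_insertNth, Fin.insertNth_removeNth, update_eq_self]
  rw [hab, ← coe_multilinearMap,
    MultilinearMap.map_add_eq_add_sum_update _ L hL a b fun i => (ψ (e i)).2]
  simp only [coe_multilinearMap, hupdate, sum_const, card_univ, Fintype.card_fin]
  rw [← Nat.cast_smul_eq_nsmul R, smul_smul, Nat.cast_succ, hc, neg_one_smul, add_neg_cancel]

end AlternatingMap

namespace IsPolyLag

variable {V T : Type*} [AddCommGroup V] [Module ℝ V] [AddCommGroup T] [Module ℝ T] {k : ℕ}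
  {ω : V [⋀^Fin (k+1)]→ₗ[ℝ] T} {L : Submodule ℝ V}

theorem map_eq_zero_of_mem_of_mem (hL : IsPolyLag ω L) {x : Fin (k+1) → V} {i j : Fin (k+1)}
    (hij : i ≠ j) (hi : x i ∈ L) (hj : x j ∈ L) : ω x = 0 := by
  obtain ⟨m, rfl⟩ := Fin.exists_succAbove_eq hij.symm
  have h := (hL (ω.curryLeft (x i))).mp ⟨x i, hi, fun _ => rfl⟩ (i.removeNth x) m hj
  rw [← i.insertNth_self_removeNth x, ω.map_insertNth, ← ω.curryLeft_apply_apply, h,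
    smul_zero]

theorem exists_map_vecCons_eq_smul (hL : IsPolyLag ω L) {E₀ : Submodule ℝ V}
    (hE₀ : IsCompl E₀ L) (c : ℝ) :
    ∃ ψ : E₀ →ₗ[ℝ] L, ∀ (e : E₀) (y : Fin k → V), (∀ j, y j ∈ E₀) →
      ω (Matrix.vecCons (ψ e : V) y) = c • ω (Matrix.vecCons (e : V) y) := by
  set π := E₀.projection L hE₀
  set A : E₀ →ₗ[ℝ] V [⋀^Fin k]→ₗ[ℝ] T :=
    c • ((ω.compLinearMap π).curryLeft ∘ₗ E₀.subtype)
  have hA : ∀ e y, A e y = c • ω (π ∘ Matrix.vecCons (e : V) y) := fun _ _ => rfl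
  have hrange : ∀ e, A e ∈ LinearMap.range (ω.curryLeft ∘ₗ L.subtype) := by
    intro e
    obtain ⟨v, hv, hvA⟩ := (hL (A e)).mpr fun y m hy => by
      rw [hA, ω.map_coord_zero m.succ (Submodule.projection_apply_of_mem_right hE₀ hy),
        smul_zero]
    exact ⟨⟨v, hv⟩, AlternatingMap.ext hvA⟩
  obtain ⟨ψ, hψ⟩ := Module.projective_lifting_property
    (ω.curryLeft ∘ₗ L.subtype).rangeRestrict (A.codRestrict _ hrange)
    (LinearMap.surjective_rangeRestrict _)
  refine ⟨ψ, fun e y hy => ?_⟩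
  have hψe : ω.curryLeft (ψ e) y = A e y :=
    DFunLike.congr_fun (congrArg Subtype.val (LinearMap.congr_fun hψ e)) y
  rw [← ω.curryLeft_apply_apply, hψe, hA]
  congr 2
  refine funext (Fin.cases ?_ fun j => ?_)
  · exact Submodule.projection_apply_left hE₀ e
  · exact Submodule.projection_apply_of_mem_left hE₀ (hy j)

end IsPolyLag

theorem stmt9_general {V T : Type*} [AddCommGroup V] [Module ℝ V]
    [AddCommGroup T] [Module ℝ T] {k : ℕ}
    (ω : V [⋀^Fin (k+1)]→ₗ[ℝ] T)
    (L : Submodule ℝ V) (hL : IsPolyLag ω L) :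
    ∃ E : Submodule ℝ V,
      Disjoint E L ∧ E ⊔ L = ⊤
        ∧ ∀ x : Fin (k+1) → V, (∀ i, x i ∈ E) → ω x = 0 := by
  obtain ⟨E₀, hE₀⟩ := L.exists_isCompl
  obtain ⟨ψ, hψ⟩ := hL.exists_map_vecCons_eq_smul hE₀.symm (-((k : ℝ) + 1)⁻¹)
  have hc : ((k : ℝ) + 1) * -((k : ℝ) + 1)⁻¹ = -1 := by field_simp
  have hcompl := LinearMap.isCompl_graphIn hE₀.symm ψ
  exact ⟨ψ.graphIn, hcompl.disjoint, hcompl.sup_eq_top,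
    ω.map_eq_zero_of_mem_graphIn (fun _ _ _ => hL.map_eq_zero_of_mem_of_mem) ψ _ hc hψ⟩

/-- A polylagrangian subspace `L` admits a complementary subspace `E` (`V = E ⊕ L`)
which is `k`-isotropic: `ω` vanishes on any `k+1` vectors of `E`. -/
theorem stmt9 {V T : Type*} [AddCommGroup V] [Module ℝ V] [FiniteDimensional ℝ V]
    [AddCommGroup T] [Module ℝ T] [FiniteDimensional ℝ T] {k N : ℕ} (hk : 1 ≤ k)
    (ω : V [⋀^Fin (k+1)]→ₗ[ℝ] T) (hω : ω ≠ 0)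
    (L : Submodule ℝ V) (hL : IsPolyLag ω L) (hN : Module.finrank ℝ (V ⧸ L) = N) :
    ∃ E : Submodule ℝ V,
      Disjoint E L ∧ E ⊔ L = ⊤
        ∧ ∀ x : Fin (k+1) → V, (∀ i, x i ∈ E) → ω x = 0 :=
  stmt9_general ω L hL
end

section
/- Darboux theorem for polylagrangian vector spaces: let V and T̂ be finite-dimensional real vector spaces and ω̂ a T̂-valued polylagrangian (k+1)-form of rank N on V with polylagrangian subspace L. Then there exist a basis {ê_a} of T̂ with dual basis {ê^a}, a basis {e_i : 1 ≤ i ≤ N} of a subspace E complementary to L in V with dual 1-forms {e^i} ⊆ L^⊥, and vectors e_a^{i₁…i_k} ∈ L (1 ≤ a ≤ n̂, 1 ≤ i₁ < … < i_k ≤ N) spanning a complement of ker ω̂ in L, such that ω̂ = (1/k!) (e_{i₁…i_k}^a ∧ e^{i₁} ∧ ⋯ ∧ e^{i_k}) ⊗ ê_a in terms of the dual basis; equivalently, ω̂♭(e_a^{i₁…i_k}) = e^{i₁} ∧ ⋯ ∧ e^{i_k} ⊗ ê_a. -/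
open Module

section Aux

variable {V T : Type*} [AddCommGroup V] [Module ℝ V] [AddCommGroup T] [Module ℝ T]

lemma aux_zero {k : ℕ} (ω : V [⋀^Fin (k+1)]→ₗ[ℝ] T) {v : V}
    (hv : ∀ x : Fin k → V, ω (Fin.cons v x) = 0)
    (y : Fin (k+1) → V) (j : Fin (k+1)) (hy : y j = v) : ω y = 0 := by
  classical
  have h := ω.map_perm y (Equiv.swap 0 j)
  have h0 : (y ∘ Equiv.swap 0 j) 0 = v := by simp [hy]
  have hz : ω (y ∘ Equiv.swap 0 j) = 0 := by
    have h1 := hv (Fin.tail (y ∘ Equiv.swap 0 j))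
    rwa [← h0, Fin.cons_self_tail] at h1
  rw [hz] at h
  rcases Int.units_eq_one_or (Equiv.Perm.sign (Equiv.swap 0 j)) with hs | hs <;>
    rw [hs] at h <;> simpa using h.symm

lemma aux_det {k N : ℕ} (s s' : Fin k → Fin N) (hs : StrictMono s) (hs' : StrictMono s') :
    (Matrix.of fun q p : Fin k => if s p = s' q then (1:ℝ) else 0).det
      = if s = s' then 1 else 0 := by
  by_cases h : s = s'
  · subst h
    rw [if_pos rfl]
    have h1 : (Matrix.of fun q p : Fin k => if s p = s q then (1:ℝ) else 0) = 1 := by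
      ext q p
      simp [Matrix.one_apply, hs.injective.eq_iff, eq_comm]
    rw [h1, Matrix.det_one]
  · rw [if_neg h]
    have hr : Set.range s ≠ Set.range s' := fun hr => h ((@StrictMono.range_inj (Fin k) (Fin N)
      (inferInstance : LinearOrder (Fin k)) (inferInstance : Preorder (Fin N))
      (inferInstance : WellFoundedLT (Fin k)) s s' hs hs').mp hr)
    by_cases hss : Set.range s ⊆ Set.range s'
    · have h2 : ¬ Set.range s' ⊆ Set.range s := by
        intro h3
        exact hr (le_antisymm hss h3)
      obtain ⟨i, hi⟩ := Set.not_subset.mp h2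
      obtain ⟨q₀, rfl⟩ := hi.1
      apply Matrix.det_eq_zero_of_row_eq_zero q₀
      intro p
      simp only [Matrix.of_apply, ite_eq_right_iff]
      intro hsp
      exact absurd ⟨p, hsp⟩ hi.2
    · obtain ⟨i, hi⟩ := Set.not_subset.mp hss
      obtain ⟨p₀, rfl⟩ := hi.1
      apply Matrix.det_eq_zero_of_column_eq_zero p₀
      intro q
      simp only [Matrix.of_apply, ite_eq_right_iff]
      intro hsp
      exact absurd ⟨q, hsp.symm⟩ hi.2

end Aux



lemma aux_sum_apply {V T : Type*} [AddCommGroup V] [Module ℝ V] [AddCommGroup T] [Module ℝ T]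
    {k : ℕ} {α : Type*} (g : α → (V [⋀^Fin k]→ₗ[ℝ] T)) (s : Finset α) (x : Fin k → V) :
    (∑ a ∈ s, g a) x = ∑ a ∈ s, g a x := by
  induction s using Finset.cons_induction with
  | empty => rfl
  | cons a s ha ih => simp [Finset.sum_cons, AlternatingMap.add_apply, ih]

lemma aux_ext {V T : Type*} [AddCommGroup V] [Module ℝ V]
    [AddCommGroup T] [Module ℝ T] {k N : ℕ}
    (L : Submodule ℝ V) (e : Fin N → V) (ε : Fin N → Module.Dual ℝ V)
    (hεL : ∀ i, ∀ v ∈ L, ε i v = 0)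
    (hεe : ∀ i j, ε i (e j) = if i = j then 1 else 0)
    (hsup : Submodule.span ℝ (Set.range e) ⊔ L = ⊤)
    (α β : V [⋀^Fin k]→ₗ[ℝ] T)
    (hα : ∀ (x : Fin k → V) (i : Fin k), x i ∈ L → α x = 0)
    (hβ : ∀ (x : Fin k → V) (i : Fin k), x i ∈ L → β x = 0)
    (h : ∀ s : Fin k → Fin N, StrictMono s → (α fun q => e (s q)) = β fun q => e (s q)) :
    α = β := by
  classical
  -- e is linearly independent
  have hind : LinearIndependent ℝ e := by
    rw [Fintype.linearIndependent_iff]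
    intro c hc i
    have h1 := congrArg (ε i) hc
    simpa [map_sum, map_smul, hεe, mul_ite, Finset.sum_ite_eq] using h1
  -- a basis of L
  let bL := Basis.ofVectorSpace ℝ L
  have hindL : LinearIndependent ℝ (fun j => (bL j : V)) :=
    bL.linearIndependent.map' L.subtype L.ker_subtype
  have hspanL : Submodule.span ℝ (Set.range fun j => (bL j : V)) = L := by
    have h2 : (Set.range fun j => (bL j : V)) = L.subtype '' Set.range bL := by
      rw [← Set.range_comp]; rfl
    rw [h2, ← Submodule.map_span, bL.span_eq, Submodule.map_subtype_top]
  have hdisj : Disjoint (Submodule.span ℝ (Set.range e)) L := by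
    rw [Submodule.disjoint_def]
    intro v hv hvL
    rw [Submodule.mem_span_range_iff_exists_fun] at hv
    obtain ⟨c, hc⟩ := hv
    have hc0 : ∀ i, c i = 0 := by
      intro i
      have h1 := congrArg (ε i) hc
      simpa [map_sum, map_smul, hεe, mul_ite, Finset.sum_ite_eq, hεL i v hvL] using h1
    rw [← hc]
    simp [hc0]
  -- combined basis
  let g : (Fin N ⊕ (Module.Basis.ofVectorSpaceIndex ℝ ↥L)) → V := Sum.elim e fun j => (bL j : V)
  have hgind : LinearIndependent ℝ g :=
    hind.sum_type hindL (by rw [hspanL]; exact hdisj)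
  have hgspan : ⊤ ≤ Submodule.span ℝ (Set.range g) := by
    rw [Set.Sum.elim_range, Submodule.span_union, hspanL, hsup]
  let B : Basis _ ℝ V := Basis.mk hgind hgspan
  apply Basis.ext_alternating B
  intro v hv
  by_cases hall : ∀ j, ∃ i, v j = Sum.inl i
  · choose w hw using hall
    have hwinj : Function.Injective w := by
      intro a b hab
      have : v a = v b := by rw [hw a, hw b, hab]
      exact hv this
    let σ := Tuple.sort w
    have hmono : StrictMono (w ∘ σ) :=
      (Tuple.monotone_sort w).strictMono_of_injective (hwinj.comp σ.injective)
    have hBe : ∀ i, B (v i) = e (w i) := by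
      intro i
      rw [hw i]
      simp [B, Basis.mk_apply, g]
    have hcomp : (fun i => B (v i)) = (fun q => e ((w ∘ σ) q)) ∘ ⇑σ⁻¹ := by
      funext i
      simp [hBe, Function.comp]
    rw [hcomp, AlternatingMap.map_perm, AlternatingMap.map_perm, h _ hmono]
  · push_neg at hall
    obtain ⟨j, hj⟩ := hall
    have hjL : B (v j) ∈ L := by
      rcases hvj : v j with i | j'
      · exact absurd hvj (hj i)
      · simp only [B, Basis.mk_apply, g, Sum.elim_inr]; exact (bL j').2
    rw [hα _ j hjL, hβ _ j hjL]


/-- Darboux theorem for polylagrangian vector spaces: there exist a basis `b` of `T`,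
vectors `e i` spanning a complement `E` of `L` with dual `1`-forms `ε i ∈ L^⊥`, and
vectors `f a s ∈ L` (indexed by `a` and strictly increasing multi-indices
`s : Fin k → Fin N`) spanning a complement of `ker ω` in `L`, such that
`i_{f a s} ω = e^{s 0} ∧ ⋯ ∧ e^{s (k-1)} ⊗ b a`, i.e.
`ω (f a s, x₁, …, x_k) = det (ε (s p) (x q)) • b a`. -/
theorem stmt11 {V T : Type*} [AddCommGroup V] [Module ℝ V] [FiniteDimensional ℝ V]
    [AddCommGroup T] [Module ℝ T] [FiniteDimensional ℝ T] {k N : ℕ} (hk : 1 ≤ k)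
    (ω : V [⋀^Fin (k+1)]→ₗ[ℝ] T) (hω : ω ≠ 0)
    (L : Submodule ℝ V) (hL : IsPolyLag ω L) (hN : Module.finrank ℝ (V ⧸ L) = N) :
    ∃ (nh : ℕ) (b : Basis (Fin nh) ℝ T) (e : Fin N → V) (ε : Fin N → Module.Dual ℝ V)
      (f : Fin nh → {s : Fin k → Fin N // StrictMono s} → V),
      (∀ i, ∀ v ∈ L, ε i v = 0)
        ∧ (∀ i j, ε i (e j) = if i = j then 1 else 0)
        ∧ Disjoint (Submodule.span ℝ (Set.range e)) L
        ∧ Submodule.span ℝ (Set.range e) ⊔ L = ⊤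
        ∧ (∀ a s, f a s ∈ L)
        ∧ Disjoint
            (Submodule.span ℝ (Set.range fun p : Fin nh × {s : Fin k → Fin N // StrictMono s} => f p.1 p.2))
            (LinearMap.ker ω.curryLeft)
        ∧ (Submodule.span ℝ (Set.range fun p : Fin nh × {s : Fin k → Fin N // StrictMono s} => f p.1 p.2))
            ⊔ LinearMap.ker ω.curryLeft = L
        ∧ ∀ a s (x : Fin k → V),
            ω (Fin.cons (f a s) x)
              = Matrix.det (Matrix.of fun p q : Fin k => ε (s.1 p) (x q)) • b a := by
  classical
  have hT : Nontrivial T := by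
    by_contra h
    rw [not_nontrivial_iff_subsingleton] at h
    exact hω (AlternatingMap.ext fun x => Subsingleton.elim _ _)
  set nh := finrank ℝ T with hnh
  have hnh1 : 0 < nh := finrank_pos
  let b : Basis (Fin nh) ℝ T := Module.finBasis ℝ T
  -- quotient basis and section
  let bQ : Basis (Fin N) ℝ (V ⧸ L) := Module.finBasisOfFinrankEq ℝ (V ⧸ L) hN
  obtain ⟨σV, hσV⟩ := L.mkQ.exists_rightInverse_of_surjective
    (LinearMap.range_eq_top.mpr (Submodule.mkQ_surjective L))
  have hmkσ : ∀ x, L.mkQ (σV x) = x := fun x => by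
    have h1 := LinearMap.ext_iff.mp hσV x
    simpa using h1
  let e : Fin N → V := fun i => σV (bQ i)
  let ε : Fin N → Module.Dual ℝ V := fun i => (bQ.coord i).comp L.mkQ
  have hεL : ∀ i, ∀ v ∈ L, ε i v = 0 := by
    intro i v hv
    have h1 : L.mkQ v = 0 := by
      rw [Submodule.mkQ_apply, Submodule.Quotient.mk_eq_zero]; exact hv
    simp [ε, h1]
  have hεe : ∀ i j, ε i (e j) = if i = j then 1 else 0 := by
    intro i j
    simp [ε, e, hmkσ, Basis.coord_apply, Basis.repr_self, Finsupp.single_apply, eq_comm]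
  have hdec : ∀ v : V, v - ∑ i, ε i v • e i ∈ L := by
    intro v
    have h1 : L.mkQ (v - ∑ i, ε i v • e i) = 0 := by
      rw [map_sub, map_sum]
      simp only [map_smul, hmkσ, e, ε, LinearMap.comp_apply, Basis.coord_apply]
      rw [bQ.sum_repr (L.mkQ v), sub_self]
    rwa [Submodule.mkQ_apply, Submodule.Quotient.mk_eq_zero] at h1
  -- span properties of e
  have hind : LinearIndependent ℝ e := by
    rw [Fintype.linearIndependent_iff]
    intro c hc i
    have h1 := congrArg (ε i) hc
    simpa [map_sum, map_smul, hεe, mul_ite, Finset.sum_ite_eq] using h1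
  have hdisjE : Disjoint (Submodule.span ℝ (Set.range e)) L := by
    rw [Submodule.disjoint_def]
    intro v hv hvL
    rw [Submodule.mem_span_range_iff_exists_fun] at hv
    obtain ⟨c, hc⟩ := hv
    have hc0 : ∀ i, c i = 0 := by
      intro i
      have h1 := congrArg (ε i) hc
      simpa [map_sum, map_smul, hεe, mul_ite, Finset.sum_ite_eq, hεL i v hvL] using h1
    rw [← hc]; simp [hc0]
  have hsupE : Submodule.span ℝ (Set.range e) ⊔ L = ⊤ := by
    rw [eq_top_iff]
    rintro v -
    have h1 : (∑ i, ε i v • e i) ∈ Submodule.span ℝ (Set.range e) :=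
      Submodule.sum_mem _ fun i _ =>
        Submodule.smul_mem _ _ (Submodule.subset_span (Set.mem_range_self i))
    have h2 := Submodule.add_mem_sup h1 (hdec v)
    simpa using h2
  -- model alternating forms
  letI : Fintype {s : Fin k → Fin N // StrictMono s} := Fintype.ofFinite _
  set S := {s : Fin k → Fin N // StrictMono s} with hS
  let detF : S → (V [⋀^Fin k]→ₗ[ℝ] ℝ) := fun s =>
    (Matrix.detRowAlternating).compLinearMap (LinearMap.pi fun p => ε (s.1 p))
  have hdetF : ∀ (s : S) (x : Fin k → V),
      detF s x = (Matrix.of fun q p : Fin k => ε (s.1 p) (x q)).det := fun s x => rfl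
  have hdetF_L : ∀ (s : S) (x : Fin k → V) (i : Fin k), x i ∈ L → detF s x = 0 := by
    intro s x i hx
    rw [hdetF]
    apply Matrix.det_eq_zero_of_row_eq_zero i
    intro p
    exact hεL _ _ hx
  have hdetF_e : ∀ s s' : S, detF s (fun q => e (s'.1 q)) = if s = s' then 1 else 0 := by
    intro s s'
    rw [hdetF]
    have h1 : (Matrix.of fun q p : Fin k => ε (s.1 p) (e (s'.1 q)))
        = Matrix.of fun q p : Fin k => if s.1 p = s'.1 q then (1:ℝ) else 0 := by
      ext q p; exact hεe _ _
    rw [h1, aux_det _ _ s.2 s'.2]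
    by_cases hss : s = s'
    · subst hss; simp
    · rw [if_neg (fun hh => hss (Subtype.ext hh)), if_neg hss]
  -- construct f
  have hf_ex : ∀ (a : Fin nh) (s : S), ∃ v, v ∈ L ∧ ∀ x, ω (Fin.cons v x) = detF s x • b a := by
    intro a s
    have h1 := (hL ((LinearMap.toSpanSingleton ℝ T (b a)).compAlternatingMap (detF s))).mpr
      (by intro x i hx
          simp [LinearMap.compAlternatingMap_apply, LinearMap.toSpanSingleton_apply,
            hdetF_L s x i hx])
    obtain ⟨v, hvL, hv⟩ := h1
    exact ⟨v, hvL, fun x => by simpa [LinearMap.compAlternatingMap_apply,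
      LinearMap.toSpanSingleton_apply] using hv x⟩
  choose f hfL hf using hf_ex
  have hcurry : ∀ (v : V) (x : Fin k → V), ω.curryLeft v x = ω (Fin.cons v x) := fun v x => rfl
  -- forward direction of hL
  have hvanish : ∀ v ∈ L, ∀ (x : Fin k → V) (i : Fin k), x i ∈ L → ω (Fin.cons v x) = 0 := by
    intro v hv x i hx
    have h1 := (hL (ω.curryLeft v)).mp ⟨v, hv, fun x => (hcurry v x).symm⟩
    have h2 := h1 x i hx
    rwa [hcurry] at h2
  -- expansion for forms vanishing on L
  have hB : ∀ α : V [⋀^Fin k]→ₗ[ℝ] T, (∀ (x : Fin k → V) (i : Fin k), x i ∈ L → α x = 0) →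
      ∀ x, α x = ∑ s : S, detF s x • α (fun q => e (s.1 q)) := by
    intro α hα x
    have h1 : α = ∑ s : S,
        (LinearMap.toSpanSingleton ℝ T (α fun q => e (s.1 q))).compAlternatingMap (detF s) := by
      apply aux_ext L e ε hεL hεe hsupE _ _ hα
      · intro y i hy
        rw [aux_sum_apply]
        apply Finset.sum_eq_zero
        intro s _
        simp [LinearMap.compAlternatingMap_apply, LinearMap.toSpanSingleton_apply,
          hdetF_L s y i hy]
      · intro s hs
        rw [aux_sum_apply]
        rw [Finset.sum_congr rfl (fun s' _ => by
          rw [LinearMap.compAlternatingMap_apply, LinearMap.toSpanSingleton_apply,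
            hdetF_e s' ⟨s, hs⟩, ite_smul, one_smul, zero_smul])]
        rw [Finset.sum_ite_eq' Finset.univ (⟨s, hs⟩ : S)]
        simp
    conv_lhs => rw [h1]
    rw [aux_sum_apply]
    apply Finset.sum_congr rfl
    intro s _
    rw [LinearMap.compAlternatingMap_apply, LinearMap.toSpanSingleton_apply]
  -- the kernel is contained in L
  have hker : LinearMap.ker ω.curryLeft ≤ L := by
    intro v hv
    rw [LinearMap.mem_ker] at hv
    have hv0 : ∀ x : Fin k → V, ω (Fin.cons v x) = 0 := fun x => by
      rw [← hcurry, hv]; rfl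
    by_contra hvL
    have hex : ∃ i₀, ε i₀ v ≠ 0 := by
      by_contra hno
      push_neg at hno
      apply hvL
      have h1 := hdec v
      simpa [hno] using h1
    obtain ⟨i₀, hi₀⟩ := hex
    by_cases hkN : k ≤ N
    · -- build a strictly monotone multi-index containing i₀
      obtain ⟨t, hti, htu, htc⟩ := Finset.exists_subsuperset_card_eq
        (Finset.singleton_subset_iff.mpr (Finset.mem_univ i₀)) (by simpa using hk)
        (by simpa using hkN)
      let oi := t.orderIsoOfFin htc
      let sbar : Fin k → Fin N := fun p => (oi p : Fin N)
      have hsbar : StrictMono sbar := fun p q hpq => oi.strictMono hpq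
      let p₀ : Fin k := oi.symm ⟨i₀, hti (Finset.mem_singleton_self i₀)⟩
      have hsp₀ : sbar p₀ = i₀ := by simp [sbar, p₀]
      let s : S := ⟨sbar, hsbar⟩
      let x : Fin k → V := fun q => if q = p₀ then v else e (sbar q)
      have hd : detF s x = ε i₀ v := by
        rw [hdetF]
        have h1 : (Matrix.of fun q p : Fin k => ε (s.1 p) (x q))
            = (1 : Matrix (Fin k) (Fin k) ℝ).updateRow p₀
                (∑ i, (fun i => ε (sbar i) v) i • (1 : Matrix (Fin k) (Fin k) ℝ) i) := by
          ext q p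
          by_cases hq : q = p₀
          · subst hq
            simp [Matrix.updateRow_self, Matrix.one_apply, mul_ite, Finset.sum_ite_eq',
              x, s, Matrix.of_apply]
          · rw [Matrix.updateRow_ne hq]
            simp [x, hq, s, hεe, Matrix.one_apply, hsbar.injective.eq_iff, eq_comm]
        rw [h1, Matrix.det_updateRow_sum]
        simp [hsp₀]
      have h2 : ω (Fin.cons (f ⟨0, hnh1⟩ s) x) = ε i₀ v • b ⟨0, hnh1⟩ := by
        rw [hf, hd]
      have h3 : ω (Fin.cons (f ⟨0, hnh1⟩ s) x) = 0 := by
        apply aux_zero ω hv0 _ p₀.succ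
        simp [Fin.cons_succ, x]
      rw [h3] at h2
      exact hi₀ (by
        have h4 := h2.symm
        rcases smul_eq_zero.mp h4 with h5 | h5
        · exact h5
        · exact absurd h5 (b.ne_zero _))
    · -- k > N : derive a contradiction with ω ≠ 0
      push_neg at hkN
      have hSe : IsEmpty S := by
        constructor
        intro s
        have h1 := Fintype.card_le_of_injective s.1 s.2.injective
        simp only [Fintype.card_fin] at h1
        omega
      have hLker : ∀ u ∈ L, ∀ y : Fin k → V, ω (Fin.cons u y) = 0 := by
        intro u hu y
        have h1 := hB (ω.curryLeft u)
          (fun x i hx => by rw [hcurry]; exact hvanish u hu x i hx) y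
        rw [hcurry] at h1
        simpa using h1
      apply hω
      ext y
      simp only [AlternatingMap.zero_apply]
      let p : Fin (k+1) → V := fun j => ∑ i, ε i (y j) • e i
      have hyd : y = p + (y - p) := by abel
      have hpe : ∀ j, p j ∈ Submodule.span ℝ (Set.range e) := fun j =>
        Submodule.sum_mem _ fun i _ =>
          Submodule.smul_mem _ _ (Submodule.subset_span (Set.mem_range_self i))
      calc ω y = ω (p + (y - p)) := by rw [← hyd]
        _ = ∑ u : Finset (Fin (k+1)), ω.toMultilinearMap (u.piecewise p (y - p)) := by
              rw [← AlternatingMap.coe_multilinearMap]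
              exact ω.toMultilinearMap.map_add_univ p (y - p)
        _ = 0 := by
              apply Finset.sum_eq_zero
              intro u _
              by_cases hu : u = Finset.univ
              · subst hu
                rw [Finset.piecewise_univ]
                have hdep : ¬ LinearIndependent ℝ p := by
                  intro hli
                  have h1 : LinearIndependent ℝ
                      (fun j => (⟨p j, hpe j⟩ : Submodule.span ℝ (Set.range e))) := by
                    apply LinearIndependent.of_comp (Submodule.span ℝ (Set.range e)).subtype
                    exact hli
                  have h2 := h1.fintype_card_le_finrank
                  rw [finrank_span_eq_card hind] at h2
                  simp only [Fintype.card_fin] at h2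
                  omega
                exact ω.map_linearDependent p hdep
              · obtain ⟨j, hj⟩ : ∃ j, j ∉ u := by
                  by_contra hcon
                  push_neg at hcon
                  exact hu (Finset.eq_univ_iff_forall.mpr hcon)
                rw [AlternatingMap.coe_multilinearMap]
                have hjL : (y - p) j ∈ L := by
                  have := hdec (y j)
                  simpa [p] using this
                exact aux_zero ω (hLker _ hjL) _ j (Finset.piecewise_eq_of_notMem _ _ _ hj)
  -- disjointness of the span of the f's with the kernel
  have hdisjF : Disjoint
      (Submodule.span ℝ (Set.range fun p : Fin nh × S => f p.1 p.2))
      (LinearMap.ker ω.curryLeft) := by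
    rw [Submodule.disjoint_def]
    intro v hvs hvk
    rw [Submodule.mem_span_range_iff_exists_fun] at hvs
    obtain ⟨c, hc⟩ := hvs
    rw [LinearMap.mem_ker] at hvk
    have h0 : ∀ s' : S, ∑ a, c (a, s') • b a = 0 := by
      intro s'
      have h1 : ω.curryLeft (∑ q : Fin nh × S, c q • f q.1 q.2) (fun q => e (s'.1 q)) = 0 := by
        rw [hc, hvk]; rfl
      rw [map_sum] at h1
      simp only [map_smul] at h1
      rw [aux_sum_apply] at h1
      simp only [AlternatingMap.smul_apply] at h1
      rw [Finset.sum_congr rfl (fun q _ => by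
        rw [hcurry, hf, hdetF_e, ite_smul, one_smul, zero_smul])] at h1
      rw [Fintype.sum_prod_type_right] at h1
      rw [Finset.sum_congr rfl (fun sx _ => by
        rw [Finset.sum_congr rfl (fun a _ => by
          rw [smul_ite, smul_zero])])] at h1
      have h2 : ∀ sx : S, (∑ a, if sx = s' then c (a, sx) • b a else 0)
          = if sx = s' then ∑ a, c (a, sx) • b a else 0 := by
        intro sx; split_ifs <;> simp
      rw [Finset.sum_congr rfl (fun sx _ => h2 sx),
        Finset.sum_ite_eq' Finset.univ s'] at h1
      simpa using h1
    have hc0 : ∀ q : Fin nh × S, c q = 0 := by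
      rintro ⟨a, s'⟩
      exact Fintype.linearIndependent_iff.mp b.linearIndependent
        (fun a => c (a, s')) (h0 s') a
    rw [← hc]
    simp [hc0]
  -- the span of the f's together with the kernel is L
  have hsupF : (Submodule.span ℝ (Set.range fun p : Fin nh × S => f p.1 p.2))
      ⊔ LinearMap.ker ω.curryLeft = L := by
    apply le_antisymm
    · apply sup_le
      · rw [Submodule.span_le]
        rintro _ ⟨q, rfl⟩
        exact hfL q.1 q.2
      · exact hker
    · intro v hvL
      let c : Fin nh × S → ℝ := fun q => b.repr (ω (Fin.cons v fun i => e (q.2.1 i))) q.1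
      let u : V := ∑ q : Fin nh × S, c q • f q.1 q.2
      have hu : u ∈ Submodule.span ℝ (Set.range fun p : Fin nh × S => f p.1 p.2) :=
        Submodule.sum_mem _ fun q _ =>
          Submodule.smul_mem _ _ (Submodule.subset_span (Set.mem_range_self q))
      have hvu : v - u ∈ LinearMap.ker ω.curryLeft := by
        rw [LinearMap.mem_ker]
        apply AlternatingMap.ext
        intro x
        rw [map_sub]
        simp only [AlternatingMap.sub_apply, AlternatingMap.zero_apply]
        rw [sub_eq_zero]
        have hαv := hB (ω.curryLeft v)
          (fun y i hy => by rw [hcurry]; exact hvanish v hvL y i hy) x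
        simp only [hcurry] at hαv
        have hrepr : ∀ s : S, (ω (Fin.cons v fun i => e (s.1 i)))
            = ∑ a, c (a, s) • b a := fun s => (b.sum_repr _).symm
        have hcu : ω.curryLeft u x = ∑ s : S, detF s x • ∑ a, c (a, s) • b a := by
          rw [show u = ∑ q : Fin nh × S, c q • f q.1 q.2 from rfl]
          rw [map_sum]
          simp only [map_smul]
          rw [aux_sum_apply]
          simp only [AlternatingMap.smul_apply]
          rw [Finset.sum_congr rfl (fun q _ => by rw [hcurry, hf])]
          rw [Fintype.sum_prod_type_right]
          apply Finset.sum_congr rfl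
          intro sx _
          rw [Finset.smul_sum]
          apply Finset.sum_congr rfl
          intro a _
          rw [smul_comm]
        simp only [hcurry] at hcu ⊢
        rw [hαv, hcu]
        exact Finset.sum_congr rfl fun s _ => by rw [hrepr s]
      have h2 := Submodule.add_mem_sup hu hvu
      simpa using h2
  refine ⟨nh, b, e, ε, f, hεL, hεe, hdisjE, hsupE, hfL, hdisjF, hsupF, ?_⟩
  intro a s x
  rw [hf, hdetF]
  congr 1
  rw [← Matrix.det_transpose]
  rfl
end

section
/- Let W, V, T be finite-dimensional real vector spaces in a short exact sequence 0 → V → W → T → 0 with n = dim T, let ω be a nonvanishing (k+1−r)-horizontal (k+1)-form on W (1 ≤ r ≤ k+1, k+1−r ≤ n) with symbol ω̂, the (Λ^{k+1−r} T*)-valued r-form on V defined by ω̂(v₁,…,v_r) = i_{v₁} ⋯ i_{v_r} ω regarded as a fully horizontal (k+1−r)-form, i.e., as a form on T. If ω is multilagrangian with multilagrangian subspace L, then ω̂ is polylagrangian with polylagrangian subspace L, and ker ω ⊆ ker ω̂. -/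
open Module Equiv

namespace Stmt15Aux

variable {W T : Type*} [AddCommGroup W] [Module ℝ W] [AddCommGroup T] [Module ℝ T]
variable {r' m : ℕ} {V : Submodule ℝ W}

/-- The multilinear map `x ↦ β(pV∘x∘inl)(π∘x∘inr)`. -/
def symMul (pV : W →ₗ[ℝ] V) (π : W →ₗ[ℝ] T)
    (β : (↥V) [⋀^Fin r']→ₗ[ℝ] (T [⋀^Fin m]→ₗ[ℝ] ℝ)) :
    MultilinearMap ℝ (fun _ : Fin r' ⊕ Fin m => W) ℝ where
  toFun x := β (fun i => pV (x (Sum.inl i))) (fun j => π (x (Sum.inr j)))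
  map_update_add' := by
    intro dec x z a b
    have hr : ∀ (i : Fin r') (c : W),
        (fun j => π (Function.update x (Sum.inl i) c (Sum.inr j)))
          = fun j => π (x (Sum.inr j)) := by
      intro i c; funext j; rw [Function.update_of_ne (by simp)]
    have hl : ∀ (i : Fin r') (c : W),
        (fun i' => pV (Function.update x (Sum.inl i) c (Sum.inl i')))
          = Function.update (fun i' => pV (x (Sum.inl i'))) i (pV c) := by
      intro i c; funext i'
      by_cases h : i' = i
      · subst h; simp
      · rw [Function.update_of_ne (by simpa using h), Function.update_of_ne h]
    have hr' : ∀ (j : Fin m) (c : W),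
        (fun j' => π (Function.update x (Sum.inr j) c (Sum.inr j')))
          = Function.update (fun j' => π (x (Sum.inr j'))) j (π c) := by
      intro j c; funext j'
      by_cases h : j' = j
      · subst h; simp
      · rw [Function.update_of_ne (by simpa using h), Function.update_of_ne h]
    have hl' : ∀ (j : Fin m) (c : W),
        (fun i' => pV (Function.update x (Sum.inr j) c (Sum.inl i')))
          = fun i' => pV (x (Sum.inl i')) := by
      intro j c; funext i'; rw [Function.update_of_ne (by simp)]
    cases z with
    | inl i =>
      simp only [hl, hr, map_add]
      rw [β.map_update_add, AlternatingMap.add_apply]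
    | inr j =>
      simp only [hl', hr', map_add]
      rw [(β _).map_update_add]
  map_update_smul' := by
    intro dec x z c a
    have hr : ∀ (i : Fin r') (c' : W),
        (fun j => π (Function.update x (Sum.inl i) c' (Sum.inr j)))
          = fun j => π (x (Sum.inr j)) := by
      intro i c'; funext j; rw [Function.update_of_ne (by simp)]
    have hl : ∀ (i : Fin r') (c' : W),
        (fun i' => pV (Function.update x (Sum.inl i) c' (Sum.inl i')))
          = Function.update (fun i' => pV (x (Sum.inl i'))) i (pV c') := by
      intro i c'; funext i'
      by_cases h : i' = i
      · subst h; simp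
      · rw [Function.update_of_ne (by simpa using h), Function.update_of_ne h]
    have hr' : ∀ (j : Fin m) (c' : W),
        (fun j' => π (Function.update x (Sum.inr j) c' (Sum.inr j')))
          = Function.update (fun j' => π (x (Sum.inr j'))) j (π c') := by
      intro j c'; funext j'
      by_cases h : j' = j
      · subst h; simp
      · rw [Function.update_of_ne (by simpa using h), Function.update_of_ne h]
    have hl' : ∀ (j : Fin m) (c' : W),
        (fun i' => pV (Function.update x (Sum.inr j) c' (Sum.inl i')))
          = fun i' => pV (x (Sum.inl i')) := by
      intro j c'; funext i'; rw [Function.update_of_ne (by simp)]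
    cases z with
    | inl i =>
      simp only [hl, hr, map_smul]
      rw [β.map_update_smul, AlternatingMap.smul_apply]
    | inr j =>
      simp only [hl', hr', map_smul]
      rw [(β _).map_update_smul]

/-- Extension of the symbol candidate `β` to an alternating form on `W`. -/
noncomputable def symAlt (pV : W →ₗ[ℝ] V) (π : W →ₗ[ℝ] T)
    (β : (↥V) [⋀^Fin r']→ₗ[ℝ] (T [⋀^Fin m]→ₗ[ℝ] ℝ)) :
    W [⋀^Fin (r' + m)]→ₗ[ℝ] ℝ :=
  (((r'.factorial * m.factorial : ℕ) : ℝ))⁻¹ •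
    ((MultilinearMap.alternatization (symMul pV π β)).domDomCongr finSumFinEquiv)

theorem symAlt_apply (pV : W →ₗ[ℝ] V) (π : W →ₗ[ℝ] T)
    (β : (↥V) [⋀^Fin r']→ₗ[ℝ] (T [⋀^Fin m]→ₗ[ℝ] ℝ)) (x : Fin (r' + m) → W) :
    symAlt pV π β x = (((r'.factorial * m.factorial : ℕ) : ℝ))⁻¹ *
      ∑ σ' : Equiv.Perm (Fin r' ⊕ Fin m), Equiv.Perm.sign σ' •
        (β (fun i => pV (x (finSumFinEquiv (σ' (Sum.inl i)))))
          (fun j => π (x (finSumFinEquiv (σ' (Sum.inr j)))))) := by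
  simp only [symAlt, AlternatingMap.smul_apply, AlternatingMap.domDomCongr_apply,
    MultilinearMap.alternatization_apply, MultilinearMap.domDomCongr_apply, smul_eq_mul,
    Function.comp]
  rfl

/-- `symAlt` vanishes when `r'+1` arguments are vertical. -/
theorem symAlt_horiz (pV : W →ₗ[ℝ] V) (π : W →ₗ[ℝ] T)
    (β : (↥V) [⋀^Fin r']→ₗ[ℝ] (T [⋀^Fin m]→ₗ[ℝ] ℝ)) (x : Fin (r' + m) → W)
    (I : Finset (Fin (r' + m))) (hI : I.card = r' + 1) (hxI : ∀ i ∈ I, π (x i) = 0) :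
    symAlt pV π β x = 0 := by
  rw [symAlt_apply]
  rw [Finset.sum_eq_zero, mul_zero]
  intro σ' _
  have hinj : Function.Injective (fun i : Fin r' => finSumFinEquiv (σ' (Sum.inl i))) := by
    intro a b hab
    simpa using hab
  have hcard : (Finset.univ.image (fun i : Fin r' => finSumFinEquiv (σ' (Sum.inl i)))).card = r' := by
    rw [Finset.card_image_of_injective _ hinj, Finset.card_univ, Fintype.card_fin]
  obtain ⟨i₀, hi₀I, hi₀S⟩ : ∃ i₀ ∈ I,
      i₀ ∉ Finset.univ.image (fun i : Fin r' => finSumFinEquiv (σ' (Sum.inl i))) := by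
    by_contra hc
    push_neg at hc
    have := Finset.card_le_card hc
    omega
  obtain ⟨z, hz⟩ : ∃ z, finSumFinEquiv (σ' z) = i₀ :=
    ⟨σ'.symm (finSumFinEquiv.symm i₀), by simp⟩
  cases z with
  | inl i => exact absurd (hz ▸ Finset.mem_image_of_mem _ (Finset.mem_univ i)) hi₀S
  | inr j =>
    have h0 : π (x (finSumFinEquiv (σ' (Sum.inr j)))) = 0 := by rw [hz]; exact hxI i₀ hi₀I
    rw [AlternatingMap.map_coord_zero _ j h0, smul_zero]

/-- `symAlt` vanishes when some argument lies in `L`. -/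
theorem symAlt_lag (pV : W →ₗ[ℝ] V) (π : W →ₗ[ℝ] T) (L : Submodule ℝ W)
    (hLπ : ∀ w ∈ L, π w = 0) (hLpV : ∀ w ∈ L, ((pV w : W)) = w)
    (β : (↥V) [⋀^Fin r']→ₗ[ℝ] (T [⋀^Fin m]→ₗ[ℝ] ℝ))
    (hβL : ∀ (v : Fin r' → ↥V) (i : Fin r'), (v i : W) ∈ L → β v = 0)
    (x : Fin (r' + m) → W) (i₀ : Fin (r' + m)) (hx : x i₀ ∈ L) :
    symAlt pV π β x = 0 := by
  rw [symAlt_apply]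
  rw [Finset.sum_eq_zero, mul_zero]
  intro σ' _
  obtain ⟨z, hz⟩ : ∃ z, finSumFinEquiv (σ' z) = i₀ :=
    ⟨σ'.symm (finSumFinEquiv.symm i₀), by simp⟩
  cases z with
  | inl i =>
    have hmem : ((pV (x (finSumFinEquiv (σ' (Sum.inl i)))) : W)) ∈ L := by
      rw [hz, hLpV _ hx]; exact hx
    rw [hβL _ i hmem, AlternatingMap.zero_apply, smul_zero]
  | inr j =>
    have h0 : π (x (finSumFinEquiv (σ' (Sum.inr j)))) = 0 := by rw [hz]; exact hLπ _ hx
    rw [AlternatingMap.map_coord_zero _ j h0, smul_zero]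

/-- Evaluation of `symAlt` on split families. -/
theorem symAlt_append (pV : W →ₗ[ℝ] V) (π : W →ₗ[ℝ] T) (σT : T →ₗ[ℝ] W)
    (hpV : ∀ w : V, pV (w : W) = w) (hπV : ∀ w : V, π (w : W) = 0)
    (hpσ : ∀ t, pV (σT t) = 0) (hπσ : ∀ t, π (σT t) = t)
    (β : (↥V) [⋀^Fin r']→ₗ[ℝ] (T [⋀^Fin m]→ₗ[ℝ] ℝ)) (v : Fin r' → ↥V) (t : Fin m → T) :
    symAlt pV π β (Fin.append (fun i => (v i : W)) (fun j => σT (t j))) = β v t := by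
  set x : Fin (r' + m) → W := Fin.append (fun i => (v i : W)) (fun j => σT (t j)) with hxdef
  have hxl : ∀ i : Fin r', x (finSumFinEquiv (Sum.inl i)) = (v i : W) := by
    intro i; simp [hxdef, finSumFinEquiv_apply_left, Fin.append_left]
  have hxr : ∀ j : Fin m, x (finSumFinEquiv (Sum.inr j)) = σT (t j) := by
    intro j; simp [hxdef, finSumFinEquiv_apply_right, Fin.append_right]
  rw [symAlt_apply]
  rw [← Finset.sum_filter_of_ne
    (p := fun σ' => σ' ∈ (Equiv.Perm.sumCongrHom (Fin r') (Fin m)).range)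
    (f := fun σ' => Equiv.Perm.sign σ' •
        (β (fun i => pV (x (finSumFinEquiv (σ' (Sum.inl i)))))
          (fun j => π (x (finSumFinEquiv (σ' (Sum.inr j)))))))]
  swap
  · intro σ' _ hne
    by_contra hnr
    apply hne
    obtain ⟨i, j, hij⟩ : ∃ (i : Fin r') (j : Fin m), σ' (Sum.inl i) = Sum.inr j := by
      by_contra hc
      push_neg at hc
      apply hnr
      apply Equiv.Perm.mem_sumCongrHom_range_of_perm_mapsTo_inl
      rintro z ⟨i, rfl⟩
      cases hσi : σ' (Sum.inl i) with
      | inl i' => exact ⟨i', rfl⟩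
      | inr j => exact absurd hσi (hc i j)
    have h0 : pV (x (finSumFinEquiv (σ' (Sum.inl i)))) = 0 := by
      rw [hij, hxr, hpσ]
    rw [AlternatingMap.map_coord_zero β i h0, AlternatingMap.zero_apply, smul_zero]
  have hterm : ∀ σ' ∈ Finset.univ.filter
      (fun σ' => σ' ∈ (Equiv.Perm.sumCongrHom (Fin r') (Fin m)).range),
      (Equiv.Perm.sign σ' •
        (β (fun i => pV (x (finSumFinEquiv (σ' (Sum.inl i)))))
          (fun j => π (x (finSumFinEquiv (σ' (Sum.inr j))))))) = β v t := by
    intro σ' hσ'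
    rw [Finset.mem_filter] at hσ'
    obtain ⟨⟨g, h⟩, rfl⟩ := hσ'.2
    rw [Equiv.Perm.sumCongrHom_apply]
    have e1 : (fun i => pV (x (finSumFinEquiv ((Equiv.sumCongr g h) (Sum.inl i))))) = v ∘ g := by
      funext i; simp only [Equiv.sumCongr_apply, Sum.map_inl]; rw [hxl, hpV]; rfl
    have e2 : (fun j => π (x (finSumFinEquiv ((Equiv.sumCongr g h) (Sum.inr j))))) = t ∘ h := by
      funext j; simp only [Equiv.sumCongr_apply, Sum.map_inr]; rw [hxr, hπσ]; rfl
    rw [e1, e2, Equiv.Perm.sign_sumCongr, β.map_perm, AlternatingMap.smul_apply,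
      (β v).map_perm, smul_smul, smul_smul]
    have : Equiv.Perm.sign g * Equiv.Perm.sign h * (Equiv.Perm.sign g * Equiv.Perm.sign h)
        = 1 := Int.units_mul_self _
    rw [mul_assoc, this, one_smul]
  rw [Finset.sum_congr rfl hterm, Finset.sum_const]
  have hcard : (Finset.univ.filter
      (fun σ' => σ' ∈ (Equiv.Perm.sumCongrHom (Fin r') (Fin m)).range)).card
      = r'.factorial * m.factorial := by
    have himg : Finset.univ.filter
        (fun σ' => σ' ∈ (Equiv.Perm.sumCongrHom (Fin r') (Fin m)).range)
        = Finset.univ.image (fun gh : Equiv.Perm (Fin r') × Equiv.Perm (Fin m) =>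
            Equiv.Perm.sumCongrHom (Fin r') (Fin m) gh) := by
      ext σ'
      simp [MonoidHom.mem_range]
    rw [himg, Finset.card_image_of_injective _ Equiv.Perm.sumCongrHom_injective,
      Finset.card_univ, Fintype.card_prod, Fintype.card_perm, Fintype.card_perm,
      Fintype.card_fin, Fintype.card_fin]
  rw [hcard, nsmul_eq_mul, ← mul_assoc, inv_mul_cancel₀, one_mul]
  exact Nat.cast_ne_zero.mpr (by positivity)

end Stmt15Aux


open Stmt15Aux in
/-- The symbol of a multilagrangian form is polylagrangian.

Setting: a short exact sequence `0 → V → W →π T → 0` with a chosen splitting `σ`,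
and a `(k+1)`-form `ω` on `W` of horizontality degree `m = k+1−r`; we write `r = r'+1`
and `k+1 = r'+m+1` (so `k = r'+m`). The symbol `ω̂` is the `Λ^m T*`-valued `r`-form on
`V` given by `ω̂(v₀,…,v_{r'})(t₁,…,t_m) = ω(v₀,…,v_{r'},σ t₁,…,σ t_m)`.
Conclusion: `ω̂` is polylagrangian with polylagrangian subspace `L`
(elements of `Λ^{r'} L^⊥ ⊗ Λ^m T*` being represented as alternating `r'`-forms `β` on
`V` with values in the `m`-forms on `T`, vanishing whenever an argument lies in `L`),
and `ker ω ⊆ ker ω̂`. -/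
theorem stmt15 {W T : Type*} [AddCommGroup W] [Module ℝ W] [FiniteDimensional ℝ W]
    [AddCommGroup T] [Module ℝ T]
    (π : W →ₗ[ℝ] T) (hsurj : Function.Surjective π)
    (V : Submodule ℝ W) (hV : LinearMap.ker π = V)
    (σ : T →ₗ[ℝ] W) (hσ : π.comp σ = LinearMap.id)
    {r' m n : ℕ} (hn : Module.finrank ℝ T = n) (hm : m ≤ n)
    (ω : W [⋀^Fin (r' + m + 1)]→ₗ[ℝ] ℝ) (hω : ω ≠ 0)
    (hhor : ∀ (x : Fin (r' + m + 1) → W) (I : Finset (Fin (r' + m + 1))),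
      I.card = r' + 2 → (∀ i ∈ I, x i ∈ V) → ω x = 0)
    (L : Submodule ℝ W) (hLV : L ≤ V)
    (hml : ∀ α : W [⋀^Fin (r' + m)]→ₗ[ℝ] ℝ,
      (∃ v ∈ L, ∀ x : Fin (r' + m) → W, ω (Fin.cons v x) = α x)
        ↔ ((∀ (x : Fin (r' + m) → W) (i : Fin (r' + m)), x i ∈ L → α x = 0)
            ∧ ∀ (x : Fin (r' + m) → W) (I : Finset (Fin (r' + m))),
                I.card = r' + 1 → (∀ i ∈ I, x i ∈ V) → α x = 0)) :
    (∀ β : (↥V) [⋀^Fin r']→ₗ[ℝ] (T [⋀^Fin m]→ₗ[ℝ] ℝ),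
      (∃ v₀ ∈ L, ∀ (v : Fin r' → ↥V) (t : Fin m → T),
          ω (Fin.cons v₀ (Fin.append (fun i => (v i : W)) (fun j => σ (t j)))) = β v t)
        ↔ ∀ (v : Fin r' → ↥V) (i : Fin r'), (v i : W) ∈ L → β v = 0)
      ∧ ∀ w ∈ LinearMap.ker ω.curryLeft, ∀ (v : Fin r' → ↥V) (t : Fin m → T),
          ω (Fin.cons w (Fin.append (fun i => (v i : W)) (fun j => σ (t j)))) = 0 := by
  have hmemV : ∀ w : W, w ∈ V ↔ π w = 0 := fun w => by rw [← hV, LinearMap.mem_ker]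
  have hπσ : ∀ t, π (σ t) = t := fun t => DFunLike.congr_fun hσ t
  -- the vertical projection
  set pV : W →ₗ[ℝ] V := (LinearMap.id - σ.comp π).codRestrict V (fun w => by
    rw [hmemV]
    simp [hπσ]) with hpVdef
  have hpVcoe : ∀ w : W, ((pV w : W)) = w - σ (π w) := fun w => rfl
  have hpV : ∀ w : V, pV (w : W) = w := by
    intro w
    ext
    rw [hpVcoe, (hmemV _).mp w.2, map_zero, sub_zero]
  have hπV : ∀ w : V, π (w : W) = 0 := fun w => (hmemV _).mp w.2
  have hpσ : ∀ t, pV (σ t) = 0 := by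
    intro t
    ext
    rw [hpVcoe, hπσ]
    simp
  constructor
  · intro β
    constructor
    · rintro ⟨v₀, hv₀L, hv₀⟩ v i hvi
      have hc := (hml (ω.curryLeft v₀)).mp ⟨v₀, hv₀L, fun x => rfl⟩
      ext t
      rw [AlternatingMap.zero_apply, ← hv₀ v t]
      exact hc.1 (Fin.append (fun i => (v i : W)) (fun j => σ (t j))) (Fin.castAdd m i)
        (by rw [Fin.append_left]; exact hvi)
    · intro hβ
      obtain ⟨v₀, hv₀L, hv₀⟩ := (hml (symAlt pV π β)).mpr
        ⟨fun x i hxi => symAlt_lag pV π L (fun w hw => (hmemV w).mp (hLV hw))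
            (fun w hw => by rw [hpVcoe, (hmemV w).mp (hLV hw), map_zero, sub_zero])
            β hβ x i hxi,
         fun x I hI hxI => symAlt_horiz pV π β x I hI
            (fun i hi => (hmemV _).mp (hxI i hi))⟩
      exact ⟨v₀, hv₀L, fun v t => by
        rw [hv₀, symAlt_append pV π σ hpV hπV hpσ hπσ β v t]⟩
  · intro w hw v t
    rw [LinearMap.mem_ker] at hw
    calc ω (Fin.cons w (Fin.append (fun i => (v i : W)) (fun j => σ (t j))))
        = ω.curryLeft w (Fin.append (fun i => (v i : W)) (fun j => σ (t j))) := rfl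
      _ = 0 := by rw [hw]; rfl
end

section
/- Let W, V, T be finite-dimensional real vector spaces in a short exact sequence 0 → V → W → T → 0 with n = dim T, and let ω be a multipresymplectic form on W (i.e., a multilagrangian (n+1)-form with r = 2, horizontality degree n−1) with symbol ω̂. Then dim ker ω̂ − dim ker ω ≤ 1. -/
open Module

/-- The subspace of `(m+1)`-forms `α` on `W` whose "symbol vanishes", i.e.
`α(v₁, σ t₁, …, σ t_m) = 0` for all vertical `v₁` and all `t ∈ T`. -/
noncomputable def symVanish {W T : Type*} [AddCommGroup W] [Module ℝ W]
    [AddCommGroup T] [Module ℝ T] {m : ℕ} (V : Submodule ℝ W) (σ : T →ₗ[ℝ] W) :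
    Submodule ℝ (W [⋀^Fin (m + 1)]→ₗ[ℝ] ℝ) where
  carrier := {α | ∀ (v₁ : ↥V) (t : Fin m → T),
    α (Fin.cons (v₁ : W) (fun j => σ (t j))) = 0}
  add_mem' := by
    intro a b ha hb v₁ t
    simp [ha v₁ t, hb v₁ t]
  zero_mem' := by intro v₁ t; simp
  smul_mem' := by
    intro c a ha v₁ t
    simp [ha v₁ t]

/-- The kernel of the symbol `ω̂` of an `(n+1)`-form `ω` on `W` (with `n = m+1`),
as a subspace of the vertical space `V`: vectors `v ∈ V` with
`ω(v, v₁, σ t₁, …, σ t_m) = 0` for all vertical `v₁` and all `t`. -/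
noncomputable def symKer {W T : Type*} [AddCommGroup W] [Module ℝ W]
    [AddCommGroup T] [Module ℝ T] {m : ℕ} (ω : W [⋀^Fin (m + 2)]→ₗ[ℝ] ℝ)
    (V : Submodule ℝ W) (σ : T →ₗ[ℝ] W) : Submodule ℝ ↥V :=
  Submodule.comap (ω.curryLeft.comp V.subtype) (symVanish V σ)

theorem stmt16' {W T : Type*} [AddCommGroup W] [Module ℝ W] [FiniteDimensional ℝ W]
    [AddCommGroup T] [Module ℝ T]
    (π : W →ₗ[ℝ] T) (hsurj : Function.Surjective π)
    (V : Submodule ℝ W) (hV : LinearMap.ker π = V)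
    (σ : T →ₗ[ℝ] W) (hσ : π.comp σ = LinearMap.id)
    {m : ℕ} (hn : Module.finrank ℝ T = m + 1)
    (ω : W [⋀^Fin (m + 2)]→ₗ[ℝ] ℝ)
    (hhor : ∀ (x : Fin (m + 2) → W) (I : Finset (Fin (m + 2))),
      I.card = 3 → (∀ i ∈ I, x i ∈ V) → ω x = 0)
    (symKer' : Submodule ℝ ↥V)
    (hsymKer : ∀ v : ↥V, v ∈ symKer' ↔ ∀ (v₁ : ↥V) (t : Fin m → T),
      ω.curryLeft (v : W) (Fin.cons (v₁ : W) (fun j => σ (t j))) = 0) :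
    Module.finrank ℝ ↥symKer'
      ≤ Module.finrank ℝ ↥(LinearMap.ker ω.curryLeft) + 1 := by
  have hT : Module.Finite ℝ T := Module.Finite.of_surjective π hsurj
  let b : Basis (Fin (m+1)) ℝ T := Module.finBasisOfFinrankEq ℝ T hn
  -- key lemma
  have key : ∀ (v : W), v ∈ V →
      (∀ (v₁ : ↥V) (t : Fin m → T),
        ω.curryLeft v (Fin.cons (v₁ : W) (fun j => σ (t j))) = 0) →
      ω.curryLeft v (fun i => σ (b i)) = 0 →
      ω.curryLeft v = 0 := by
    intro v hvV hsym hb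
    set α := ω.curryLeft v with hα
    -- (A) two vertical entries kill α
    have hA : ∀ (x : Fin (m+1) → W) (i j : Fin (m+1)), i ≠ j →
        x i ∈ V → x j ∈ V → α x = 0 := by
      intro x i j hij hxi hxj
      have : α x = ω (Matrix.vecCons v x) := rfl
      rw [this]
      refine hhor _ ({0, i.succ, j.succ} : Finset (Fin (m+2))) ?_ ?_
      · rw [Finset.card_insert_of_notMem, Finset.card_insert_of_notMem,
          Finset.card_singleton]
        · simp [Fin.succ_injective, hij]
        · simp [(Fin.succ_ne_zero i).symm, (Fin.succ_ne_zero j).symm]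
      · intro k hk
        simp only [Finset.mem_insert, Finset.mem_singleton] at hk
        rcases hk with rfl | rfl | rfl
        · simpa using hvV
        · simpa using hxi
        · simpa using hxj
    -- (B') one vertical entry, rest in range σ
    have hone : ∀ (x : Fin (m+1) → W) (i : Fin (m+1)), x i ∈ V →
        (∀ k, k ≠ i → ∃ t, x k = σ t) → α x = 0 := by
      intro x i hxi hrange
      set e : Equiv.Perm (Fin (m+1)) := Equiv.swap 0 i with he
      have h1 : α (x ∘ e) = Equiv.Perm.sign e • α x := α.map_perm x e
      have h2 : α (x ∘ e) = 0 := by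
        have h0 : (x ∘ e) 0 ∈ V := by
          simp [he, Equiv.swap_apply_left, hxi]
        have ht : ∀ j : Fin m, ∃ t, (x ∘ e) j.succ = σ t := by
          intro j
          rcases eq_or_ne (j.succ : Fin (m+1)) i with hji | hji
          · rcases eq_or_ne i (0 : Fin (m+1)) with h0i | h0i
            · exact absurd (h0i ▸ hji) (Fin.succ_ne_zero j)
            · have : (x ∘ e) j.succ = x 0 := by
                simp [he, hji, Equiv.swap_apply_right]
              rw [this]
              exact hrange 0 (Ne.symm h0i)
          · have hj0 : (j.succ : Fin (m+1)) ≠ 0 := Fin.succ_ne_zero j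
            have : (x ∘ e) j.succ = x j.succ := by
              simp [he, Equiv.swap_apply_of_ne_of_ne hj0 hji]
            rw [this]
            exact hrange j.succ hji
        choose t htt using ht
        have hx : x ∘ e = Fin.cons ((x ∘ e) 0) (fun j => σ (t j)) := by
          ext k
          refine Fin.cases ?_ ?_ k
          · simp
          · intro j
            simp only [Fin.cons_succ]
            exact htt j
        rw [hx]
        exact hsym ⟨(x ∘ e) 0, h0⟩ t
      rw [h2] at h1
      rcases Int.units_eq_one_or (Equiv.Perm.sign e) with hs | hs <;>
        rw [hs] at h1 <;> simpa using h1.symm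
    -- (C) all entries in range σ
    have hall : ∀ (t : Fin (m+1) → T), α (fun i => σ (t i)) = 0 := by
      intro t
      set β : T [⋀^Fin (m+1)]→ₗ[ℝ] ℝ := α.compLinearMap σ with hβ
      have hβb : β ⇑b = 0 := hb
      have hβ0 : β = 0 := by
        rw [AlternatingMap.eq_smul_basis_det b β, hβb, zero_smul]
      have : α (fun i => σ (t i)) = β t := rfl
      rw [this, hβ0]
      rfl
    -- expansion
    ext x
    set u : Fin (m+1) → W := fun i => x i - σ (π (x i)) with hu'
    set s : Fin (m+1) → W := fun i => σ (π (x i)) with hs'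
    have huV : ∀ i, u i ∈ V := by
      intro i
      rw [hu', ← hV, LinearMap.mem_ker, map_sub]
      have h := LinearMap.congr_fun hσ (π (x i))
      simp only [LinearMap.comp_apply, LinearMap.id_apply] at h
      rw [h, sub_self]
    have hxus : x = u + s := by
      funext i
      simp [hu', hs']
    have hexp : α x = ∑ S : Finset (Fin (m+1)), α (S.piecewise u s) := by
      rw [hxus]
      exact α.toMultilinearMap.map_add_univ u s
    rw [hexp, AlternatingMap.zero_apply]
    apply Finset.sum_eq_zero
    intro S _
    by_cases h2 : 2 ≤ S.card
    · obtain ⟨i, hi, j, hj, hij⟩ := Finset.one_lt_card.mp h2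
      refine hA _ i j hij ?_ ?_
      · rw [Finset.piecewise_eq_of_mem _ _ _ hi]; exact huV i
      · rw [Finset.piecewise_eq_of_mem _ _ _ hj]; exact huV j
    · push_neg at h2
      rcases Nat.le_one_iff_eq_zero_or_eq_one.mp (Nat.lt_succ_iff.mp h2) with h0 | h1
      · rw [Finset.card_eq_zero] at h0
        subst h0
        rw [Finset.piecewise_empty]
        exact hall fun i => π (x i)
      · obtain ⟨i, rfl⟩ := Finset.card_eq_one.mp h1
        refine hone _ i ?_ ?_
        · rw [Finset.piecewise_eq_of_mem _ _ _ (Finset.mem_singleton_self i)]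
          exact huV i
        · intro k hk
          refine ⟨π (x k), ?_⟩
          rw [Finset.piecewise_eq_of_notMem _ _ _ (by simpa using hk)]
  -- the comparison map φ
  let φ : ↥symKer' →ₗ[ℝ] ℝ :=
    { toFun := fun v => ω.curryLeft ((v : ↥V) : W) (fun i => σ (b i))
      map_add' := by intro a a'; simp
      map_smul' := by intro c a; simp }
  have hsub : ∀ v : ↥symKer', v ∈ LinearMap.ker φ →
      ((v : ↥V) : W) ∈ LinearMap.ker ω.curryLeft := by
    intro v hv
    rw [LinearMap.mem_ker]
    refine key _ (v : ↥V).2 ?_ hv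
    intro v₁ t
    exact (hsymKer (v : ↥V)).mp v.2 v₁ t
  let g : ↥(LinearMap.ker φ) →ₗ[ℝ] ↥(LinearMap.ker ω.curryLeft) :=
    { toFun := fun v => ⟨(((v : ↥symKer') : ↥V) : W), hsub _ v.2⟩
      map_add' := by intro a a'; ext; simp
      map_smul' := by intro c a; ext; simp }
  have ginj : Function.Injective g := by
    intro a a' h
    have hW := congrArg Subtype.val h
    exact Subtype.ext (Subtype.ext (Subtype.ext hW))
  have h1 : finrank ℝ ↥(LinearMap.ker φ) ≤ finrank ℝ ↥(LinearMap.ker ω.curryLeft) :=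
    LinearMap.finrank_le_finrank_of_injective ginj
  have h2 : finrank ℝ ↥(LinearMap.range φ) ≤ 1 := by
    simpa using (LinearMap.range φ).finrank_le
  calc finrank ℝ ↥symKer'
      = finrank ℝ ↥(LinearMap.range φ) + finrank ℝ ↥(LinearMap.ker φ) :=
        (LinearMap.finrank_range_add_finrank_ker φ).symm
    _ ≤ 1 + finrank ℝ ↥(LinearMap.ker ω.curryLeft) := add_le_add h2 h1
    _ = finrank ℝ ↥(LinearMap.ker ω.curryLeft) + 1 := add_comm _ _

/-- For a multipresymplectic form `ω` (a multilagrangian `(n+1)`-form with `r = 2`,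
horizontality degree `n−1`, `n = m+1`) on the total space of `0 → V → W →π T → 0`
with splitting `σ`: `dim ker ω̂ − dim ker ω ≤ 1`. -/
theorem stmt16 {W T : Type*} [AddCommGroup W] [Module ℝ W] [FiniteDimensional ℝ W]
    [AddCommGroup T] [Module ℝ T]
    (π : W →ₗ[ℝ] T) (hsurj : Function.Surjective π)
    (V : Submodule ℝ W) (hV : LinearMap.ker π = V)
    (σ : T →ₗ[ℝ] W) (hσ : π.comp σ = LinearMap.id)
    {m : ℕ} (hn : Module.finrank ℝ T = m + 1)
    (ω : W [⋀^Fin (m + 2)]→ₗ[ℝ] ℝ) (hω : ω ≠ 0)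
    (hhor : ∀ (x : Fin (m + 2) → W) (I : Finset (Fin (m + 2))),
      I.card = 3 → (∀ i ∈ I, x i ∈ V) → ω x = 0)
    (L : Submodule ℝ W) (hLV : L ≤ V)
    (hml : ∀ α : W [⋀^Fin (m + 1)]→ₗ[ℝ] ℝ,
      (∃ v ∈ L, ∀ x : Fin (m + 1) → W, ω (Fin.cons v x) = α x)
        ↔ ((∀ (x : Fin (m + 1) → W) (i : Fin (m + 1)), x i ∈ L → α x = 0)
            ∧ ∀ (x : Fin (m + 1) → W) (I : Finset (Fin (m + 1))),
                I.card = 2 → (∀ i ∈ I, x i ∈ V) → α x = 0)) :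
    Module.finrank ℝ ↥(symKer ω V σ)
      ≤ Module.finrank ℝ ↥(LinearMap.ker ω.curryLeft) + 1 := by
  exact stmt16' π hsurj V hV σ hσ hn ω hhor (symKer ω V σ) (fun v => Iff.rfl)
end

section
/- Let W, V, T be finite-dimensional real vector spaces in a short exact sequence 0 → V → W → T → 0 with n = dim T, and let ω be a multilagrangian (k+1)-form on W of rank N and horizontality degree k+1−r (1 ≤ r ≤ k+1, k+1−r ≤ n) with multilagrangian subspace L. Then there exists a k-isotropic subspace F of W with W = F ⊕ L such that E := V ∩ F is an (r−1)-isotropic subspace of V and V = E ⊕ L. -/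
/-!
Both complements are built greedily: a subspace maximal among the isotropic subspaces disjoint
from `L` must be complementary to `L`. If `S ⊕ L` is still too small, pick `w` outside
it and a projection `q` with `L ⊆ ker q` fixing `S`. The form `α = (i_w ω) ∘ q` kills `L`, and
horizontality of `ω` (for `S = E ⊆ V`), resp. `(r-1)`-isotropy of `E` (for `S = F ⊇ E`, where `q`
projects onto `F` and maps `V` into `E`), shows that `α` vanishes on `r` vectors of `V`. The
multilagrangian property then gives `v ∈ L` with `i_v ω = α`, and the corrected vector `w - v`
lies outside `S ⊕ L` while `i_{w-v} ω = i_w ω - (i_w ω) ∘ q` vanishes on the relevant tuples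
from `S`, so `S + K (w - v)` is again isotropic.
-/

open Submodule

namespace AlternatingMap

section CommRing

variable {R M M' N ι : Type*} [CommRing R] [AddCommGroup M] [Module R M] [AddCommGroup M']
  [Module R M'] [AddCommGroup N] [Module R N]

/-- `S` is `ℓ`-isotropic for `ω` iff `ω.VanishesOn S (ℓ + 1)`, and horizontality of degree
`k + 1 - r` for a `(k + 1)`-form means `ω.VanishesOn V (r + 1)`. -/
def VanishesOn (ω : M [⋀^ι]→ₗ[R] N) (S : Submodule R M) (c : ℕ) : Prop :=
  ∀ (x : ι → M) (I : Finset ι), I.card = c → (∀ i ∈ I, x i ∈ S) → ω x = 0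

variable {ω : M [⋀^ι]→ₗ[R] N} {S T : Submodule R M} {c d : ℕ}

theorem vanishesOn_one_iff :
    ω.VanishesOn S 1 ↔ ∀ (x : ι → M) (i : ι), x i ∈ S → ω x = 0 := by
  refine ⟨fun h x i hx => h x {i} (Finset.card_singleton i) (by simpa), fun h x I hI hx => ?_⟩
  obtain ⟨i, rfl⟩ := Finset.card_eq_one.1 hI
  exact h x i (hx i (Finset.mem_singleton_self i))

theorem vanishesOn_bot (ω : M [⋀^ι]→ₗ[R] N) (c : ℕ) : ω.VanishesOn ⊥ (c + 1) := by
  intro x I hI hx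
  obtain ⟨i, hi⟩ := Finset.card_pos.1 (show 0 < I.card by omega)
  exact ω.map_coord_zero i ((mem_bot R).1 (hx i hi))

theorem VanishesOn.mono (h : ω.VanishesOn S c) (hTS : T ≤ S) (hcd : c ≤ d) :
    ω.VanishesOn T d := by
  intro x I hI hx
  obtain ⟨J, hJI, hJ⟩ := Finset.exists_subset_card_eq (hI ▸ hcd)
  exact h x J hJ fun i hi => hTS (hx i (hJI hi))

theorem VanishesOn.compLinearMap (h : ω.VanishesOn S c) {f : M' →ₗ[R] M}
    {S' : Submodule R M'} (hf : S' ≤ S.comap f) : (ω.compLinearMap f).VanishesOn S' c :=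
  fun x I hI hx => h (f ∘ x) I hI fun i hi => hf (hx i hi)

theorem VanishesOn.map_eq_of_sub_mem [Fintype ι] (h : ω.VanishesOn S (c + 1)) {x y : ι → M}
    {I : Finset ι} (hI : I.card = c) (hxy : ∀ i ∈ I, x i = y i) (hy : ∀ i ∈ I, y i ∈ S)
    (hsub : ∀ i, x i - y i ∈ S) : ω x = ω y := by
  classical
  rw [← add_sub_cancel y x, ω.map_add_univ,
    Finset.sum_eq_single_of_mem Finset.univ (Finset.mem_univ _), Finset.piecewise_univ]
  intro s _ hs
  obtain ⟨j, hj⟩ : ∃ j, j ∉ s := by simpa [Finset.eq_univ_iff_forall] using hs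
  by_cases hIs : I ⊆ s
  · refine h _ (insert j I) (by rw [Finset.card_insert_of_notMem (fun hjI => hj (hIs hjI)), hI])
      fun i hi => ?_
    rcases Finset.mem_insert.1 hi with rfl | hi
    · simpa [Finset.piecewise_eq_of_notMem _ _ _ hj] using hsub i
    · simpa [Finset.piecewise_eq_of_mem _ _ _ (hIs hi)] using hy i hi
  · obtain ⟨i, hiI, his⟩ := Finset.not_subset.1 hIs
    exact ω.map_coord_zero i (by simp [Finset.piecewise_eq_of_notMem _ _ _ his, hxy i hiI])

theorem VanishesOn.sup [Fintype ι] (hS : ω.VanishesOn S c) (hT : ω.VanishesOn T 1) :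
    ω.VanishesOn (S ⊔ T) c := by
  intro x I hI hx
  have hy (i : ι) : ∃ y, (i ∈ I → y ∈ S) ∧ x i - y ∈ T := by
    by_cases hi : i ∈ I
    · obtain ⟨s, hs, t, ht, hst⟩ := mem_sup.1 (hx i hi)
      exact ⟨s, fun _ => hs, by rwa [← hst, add_sub_cancel_left]⟩
    · exact ⟨x i, fun h => absurd h hi, by simp⟩
  choose y hyS hyT using hy
  rw [(hT : ω.VanishesOn T (0 + 1)).map_eq_of_sub_mem (I := ∅) rfl (by simp) (by simp) hyT]
  exact hS y I hI fun i hi => hyS i hi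

end CommRing

section Curry

variable {R M N : Type*} [CommRing R] [AddCommGroup M] [Module R M] [AddCommGroup N] [Module R N]
  {n c : ℕ} {ω : M [⋀^Fin (n + 1)]→ₗ[R] N} {S L V : Submodule R M}

theorem VanishesOn.curryLeft (h : ω.VanishesOn S c) (w : M) : (ω.curryLeft w).VanishesOn S c :=
  fun g I hI hg => h (Fin.cons w g) (I.map (Fin.succEmb n)) (by simp [hI]) (by simpa using hg)

theorem VanishesOn.curryLeft_of_mem (h : ω.VanishesOn S (c + 1)) {w : M} (hw : w ∈ S) :
    (ω.curryLeft w).VanishesOn S c :=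
  fun g I hI hg => h (Fin.cons w g) (Finset.cons 0 (I.map (Fin.succEmb n)) (by simp))
    (by simp [hI]) (by simpa [hw] using hg)

theorem curryLeft_vanishesOn_span_singleton (ω : M [⋀^Fin (n + 1)]→ₗ[R] N) (w : M) :
    (ω.curryLeft w).VanishesOn (R ∙ w) 1 := by
  refine vanishesOn_one_iff.2 fun g i hi => ?_
  obtain ⟨t, ht⟩ := mem_span_singleton.1 hi
  rw [← Function.update_eq_self i g, ← ht, map_update_smul, curryLeft_apply_apply,
    ω.map_eq_zero_of_eq _ (i := 0) (j := i.succ) (by simp) (Fin.succ_ne_zero i).symm, smul_zero]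

theorem map_eq_zero_of_curryLeft_vanishesOn {x : Fin (n + 1) → M} {j : Fin (n + 1)}
    (h : (ω.curryLeft (x j)).VanishesOn S c) {I : Finset (Fin (n + 1))} (hjI : j ∉ I)
    (hI : I.card = c) (hx : ∀ i ∈ I, x i ∈ S) : ω x = 0 := by
  classical
  rw [← j.insertNth_self_removeNth x, map_insertNth, ← curryLeft_apply_apply]
  refine smul_eq_zero_of_right _
    (h _ (I.preimage j.succAbove Fin.succAbove_right_injective.injOn) ?_
      fun i hi => hx _ (Finset.mem_preimage.1 hi))
  rw [Finset.card_preimage, Finset.filter_true_of_mem, hI]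
  exact fun i hi => Fin.exists_succAbove_eq fun h => hjI (h ▸ hi)

theorem VanishesOn.sup_span_singleton (hS : ω.VanishesOn S (c + 1)) {w : M}
    (hw : (ω.curryLeft w).VanishesOn S c) : ω.VanishesOn (S ⊔ R ∙ w) (c + 1) := by
  classical
  have hw' := hw.sup (curryLeft_vanishesOn_span_singleton ω w)
  intro x I hI hx
  -- move the coordinates indexed by `I` into `S` one at a time
  suffices ∀ J ⊆ I, ∀ x : Fin (n + 1) → M, (∀ i ∈ I, x i ∈ S ⊔ R ∙ w) →
      (∀ i ∈ I \ J, x i ∈ S) → ω x = 0 from this I subset_rfl x hx (by simp)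
  intro J
  induction J using Finset.induction_on with
  | empty => exact fun _ x _ hxS => hS x I hI (by simpa using hxS)
  | insert j J hjJ ih =>
    intro hJ x hx hxS
    have hjI := hJ (Finset.mem_insert_self j J)
    obtain ⟨e, he, _, ht, hxj⟩ := mem_sup.1 (hx j hjI)
    obtain ⟨t, rfl⟩ := mem_span_singleton.1 ht
    rw [← Function.update_eq_self j x, ← hxj, ω.map_update_add, ω.map_update_smul]
    have h₁ : ω (Function.update x j e) = 0 := by
      refine ih (subset_trans (Finset.subset_insert j J) hJ) _ (fun i hi => ?_) fun i hi => ?_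
      · rcases eq_or_ne i j with rfl | hij
        · simpa using mem_sup_left he
        · simpa [hij] using hx i hi
      · rcases eq_or_ne i j with rfl | hij
        · simpa using he
        · simpa [hij] using hxS i (by simp_all)
    have h₂ : ω (Function.update x j w) = 0 :=
      map_eq_zero_of_curryLeft_vanishesOn (by simpa using hw') (Finset.notMem_erase j I)
        (by rw [Finset.card_erase_of_mem hjI, hI, Nat.add_sub_cancel])
        fun i hi => by simpa [Finset.ne_of_mem_erase hi] using hx i (Finset.mem_of_mem_erase hi)
    rw [h₁, h₂, smul_zero, add_zero]

theorem exists_mem_curryLeft_sub_eq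
    (hml : ∀ α : M [⋀^Fin n]→ₗ[R] N, α.VanishesOn L 1 → α.VanishesOn V c →
      ∃ v ∈ L, ω.curryLeft v = α)
    (w : M) {q : M →ₗ[R] M} (hqL : L ≤ LinearMap.ker q)
    (hq : ((ω.curryLeft w).compLinearMap q).VanishesOn V c) :
    ∃ v ∈ L, ∀ g, ω.curryLeft (w - v) g = ω.curryLeft w g - ω.curryLeft w (q ∘ g) := by
  obtain ⟨v, hvL, hv⟩ := hml _ (((ω.curryLeft w).vanishesOn_bot 0).compLinearMap
    (by rwa [comap_bot])) hq
  exact ⟨v, hvL, fun g => by rw [map_sub, AlternatingMap.sub_apply, hv]; rfl⟩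

end Curry

end AlternatingMap

namespace Submodule

variable {K M : Type*} [Field K] [AddCommGroup M] [Module K M] [FiniteDimensional K M]

theorem exists_sup_eq_of_forall_exists_sup_span_singleton (P : Submodule K M → Prop)
    {S₀ L U : Submodule K M} (hLU : L ≤ U) (hS₀U : S₀ ≤ U) (hS₀L : Disjoint S₀ L) (h₀ : P S₀)
    (hstep : ∀ S, P S → S₀ ≤ S → Disjoint S L → S ⊔ L < U →
      ∃ w ∈ U, w ∉ S ⊔ L ∧ P (S ⊔ K ∙ w)) :
    ∃ S, P S ∧ S₀ ≤ S ∧ Disjoint S L ∧ S ⊔ L = U := by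
  obtain ⟨S, ⟨hP, hS₀S, hSU, hSL⟩, hmax⟩ := set_has_maximal_iff_noetherian.2 inferInstance
    {S | P S ∧ S₀ ≤ S ∧ S ≤ U ∧ Disjoint S L} ⟨S₀, h₀, le_rfl, hS₀U, hS₀L⟩
  refine ⟨S, hP, hS₀S, hSL, ?_⟩
  by_contra hne
  obtain ⟨w, hwU, hwSL, hPw⟩ := hstep S hP hS₀S hSL (lt_of_le_of_ne (sup_le hSU hLU) hne)
  have hdisj : Disjoint (S ⊔ K ∙ w) L := (hSL.symm.disjoint_sup_right_of_disjoint_sup_left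
    (disjoint_span_singleton_of_notMem (by rwa [sup_comm]))).symm
  have hwS : ¬K ∙ w ≤ S := fun h => hwSL (mem_sup_left (h (mem_span_singleton_self w)))
  exact hmax _ ⟨hPw, le_sup_of_le_left hS₀S,
    sup_le hSU ((span_singleton_le_iff_mem _ _).2 hwU), hdisj⟩ (left_lt_sup.2 hwS)

end Submodule

namespace AlternatingMap

variable {K M N : Type*} [Field K] [AddCommGroup M] [Module K M] [AddCommGroup N] [Module K N]
  [FiniteDimensional K M] {n c : ℕ} {ω : M [⋀^Fin (n + 1)]→ₗ[K] N} {L V : Submodule K M}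

theorem exists_vanishesOn_disjoint_sup_eq_of_le (hhor : ω.VanishesOn V (c + 2)) (hLV : L ≤ V)
    (hml : ∀ α : M [⋀^Fin n]→ₗ[K] N, α.VanishesOn L 1 → α.VanishesOn V (c + 1) →
      ∃ v ∈ L, ω.curryLeft v = α) :
    ∃ E, ω.VanishesOn E (c + 1) ∧ Disjoint E L ∧ E ⊔ L = V := by
  refine (exists_sup_eq_of_forall_exists_sup_span_singleton (ω.VanishesOn · (c + 1)) hLV bot_le
    disjoint_bot_left (ω.vanishesOn_bot c) fun E hE _ hEL hlt => ?_).imp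
    fun E ⟨hE, _, hEL, hEV⟩ => ⟨hE, hEL, hEV⟩
  obtain ⟨w, hwV, hwEL⟩ := SetLike.exists_of_lt hlt
  obtain ⟨E', hEE', hE'⟩ := hEL.exists_isCompl
  have hq_sub (x : M) : x - E'.projection L hE' x ∈ L := by
    rw [← projection_eq_self_sub_projection]
    exact projection_apply_mem _ _
  have hqV : V ≤ V.comap (E'.projection L hE') :=
    fun x hx => by simpa using sub_mem hx (hLV (hq_sub x))
  have hwV' := hhor.curryLeft_of_mem hwV
  obtain ⟨v, hvL, hv⟩ := exists_mem_curryLeft_sub_eq hml w (ker_projection hE').ge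
    (hwV'.compLinearMap hqV)
  refine ⟨w - v, sub_mem hwV (hLV hvL),
    fun h => hwEL ((sub_mem_iff_left _ (mem_sup_right hvL)).1 h),
    hE.sup_span_singleton fun g I hI hg => ?_⟩
  have hqg (i) (hi : i ∈ I) : g i = E'.projection L hE' (g i) :=
    (projection_apply_of_mem_left hE' (hEE' (hg i hi))).symm
  rw [hv, sub_eq_zero]
  refine hwV'.map_eq_of_sub_mem hI hqg (fun i hi => ?_) fun i => hLV (hq_sub (g i))
  simpa only [Function.comp_apply, ← hqg i hi] using (le_sup_left.trans hlt.le) (hg i hi)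

theorem exists_vanishesOn_le_disjoint_sup_eq_top {E : Submodule K M}
    (hml : ∀ α : M [⋀^Fin n]→ₗ[K] N, α.VanishesOn L 1 → α.VanishesOn V (c + 1) →
      ∃ v ∈ L, ω.curryLeft v = α)
    (hE : ω.VanishesOn E (c + 1)) (hEL : Disjoint E L) (hEV : E ⊔ L = V) (hcn : c ≤ n) :
    ∃ F, ω.VanishesOn F (n + 1) ∧ E ≤ F ∧ Disjoint F L ∧ F ⊔ L = ⊤ := by
  refine exists_sup_eq_of_forall_exists_sup_span_singleton (ω.VanishesOn · (n + 1)) le_top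
    le_top hEL (hE.mono le_rfl (by omega)) fun F hF hEF hFL hlt => ?_
  obtain ⟨w, -, hwFL⟩ := SetLike.exists_of_lt hlt
  obtain ⟨L', hLL', hL'⟩ := hFL.symm.exists_isCompl
  have hpL : L ≤ LinearMap.ker (F.projection L' hL'.symm) :=
    fun x hx => projection_apply_of_mem_right _ (hLL' hx)
  have hpV : V ≤ E.comap (F.projection L' hL'.symm) := by
    rw [← hEV, sup_le_iff]
    refine ⟨fun x hx => ?_, hpL.trans fun x hx => ?_⟩
    · simpa [mem_comap, projection_apply_of_mem_left _ (hEF hx)] using hx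
    · rw [mem_comap, LinearMap.mem_ker.1 hx]
      exact zero_mem E
  obtain ⟨v, hvL, hv⟩ :=
    exists_mem_curryLeft_sub_eq hml w hpL ((hE.curryLeft w).compLinearMap hpV)
  refine ⟨w - v, mem_top, fun h => hwFL ((sub_mem_iff_left _ (mem_sup_right hvL)).1 h),
    hF.sup_span_singleton fun g I hI hg => ?_⟩
  obtain rfl : I = Finset.univ := Finset.eq_univ_of_card I (by simp [hI])
  rw [hv, sub_eq_zero]
  congr 1
  funext i
  exact (projection_apply_of_mem_left _ (hg i (Finset.mem_univ i))).symm

end AlternatingMap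

/-- Here `r = r' + 1` and `k = r' + m`, so that `m = k + 1 - r` is the horizontality degree. -/
theorem stmt17_general {W : Type*} [AddCommGroup W] [Module ℝ W] [FiniteDimensional ℝ W]
    (V : Submodule ℝ W) {r' m : ℕ}
    (ω : W [⋀^Fin (r' + m + 1)]→ₗ[ℝ] ℝ)
    (hhor : ∀ (x : Fin (r' + m + 1) → W) (I : Finset (Fin (r' + m + 1))),
      I.card = r' + 2 → (∀ i ∈ I, x i ∈ V) → ω x = 0)
    (L : Submodule ℝ W) (hLV : L ≤ V)
    (hml : ∀ α : W [⋀^Fin (r' + m)]→ₗ[ℝ] ℝ,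
      (∃ v ∈ L, ∀ x : Fin (r' + m) → W, ω (Fin.cons v x) = α x)
        ↔ ((∀ (x : Fin (r' + m) → W) (i : Fin (r' + m)), x i ∈ L → α x = 0)
            ∧ ∀ (x : Fin (r' + m) → W) (I : Finset (Fin (r' + m))),
                I.card = r' + 1 → (∀ i ∈ I, x i ∈ V) → α x = 0)) :
    ∃ F : Submodule ℝ W,
      (∀ x : Fin (r' + m + 1) → W, (∀ i, x i ∈ F) → ω x = 0)
        ∧ Disjoint F L ∧ F ⊔ L = ⊤
        ∧ (∀ x : Fin (r' + m + 1) → W,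
            (∀ i : Fin (r' + m + 1), (i : ℕ) < r' + 1 → x i ∈ V ⊓ F) → ω x = 0)
        ∧ Disjoint (V ⊓ F) L ∧ (V ⊓ F) ⊔ L = V := by
  have hml' (α : W [⋀^Fin (r' + m)]→ₗ[ℝ] ℝ) (hαL : α.VanishesOn L 1)
      (hαV : α.VanishesOn V (r' + 1)) : ∃ v ∈ L, ω.curryLeft v = α :=
    let ⟨v, hvL, hv⟩ := (hml α).2 ⟨AlternatingMap.vanishesOn_one_iff.1 hαL, hαV⟩
    ⟨v, hvL, AlternatingMap.ext hv⟩
  obtain ⟨E, hE, hEL, hEV⟩ :=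
    AlternatingMap.exists_vanishesOn_disjoint_sup_eq_of_le hhor hLV hml'
  obtain ⟨F, hF, hEF, hFL, hFL'⟩ := AlternatingMap.exists_vanishesOn_le_disjoint_sup_eq_top hml'
    hE hEL hEV (Nat.le_add_right r' m)
  have hVF : V ⊓ F = E := by
    rw [← hEV, sup_inf_assoc_of_le _ hEF, hFL.symm.eq_bot, sup_bot_eq]
  refine ⟨F, fun x hx => hF x Finset.univ (by simp) fun i _ => hx i, hFL, hFL', ?_,
    hVF ▸ hEL, hVF ▸ hEV⟩
  rw [hVF]
  intro x hx
  refine hE x (Finset.univ.map (Fin.castLEEmb (show r' + 1 ≤ r' + m + 1 by omega))) (by simp)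
    fun i hi => hx i ?_
  obtain ⟨j, -, rfl⟩ := Finset.mem_map.1 hi
  exact j.isLt

/-- Existence of a `k`-isotropic complement of a multilagrangian subspace.

Setting: `0 → V → W →π T → 0`, `ω` a multilagrangian `(k+1)`-form of horizontality
degree `m = k+1−r`, with `r = r'+1` and `k+1 = r'+m+1`, and multilagrangian subspace
`L ⊆ V`. Conclusion: there is a `k`-isotropic subspace `F` of `W` with `W = F ⊕ L`
such that `E = V ∩ F` is `(r−1)`-isotropic and `V = E ⊕ L`. -/
theorem stmt17 {W T : Type*} [AddCommGroup W] [Module ℝ W] [FiniteDimensional ℝ W]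
    [AddCommGroup T] [Module ℝ T]
    (π : W →ₗ[ℝ] T) (hsurj : Function.Surjective π)
    (V : Submodule ℝ W) (hV : LinearMap.ker π = V)
    {r' m n : ℕ} (hn : Module.finrank ℝ T = n) (hm : m ≤ n)
    (ω : W [⋀^Fin (r' + m + 1)]→ₗ[ℝ] ℝ) (hω : ω ≠ 0)
    (hhor : ∀ (x : Fin (r' + m + 1) → W) (I : Finset (Fin (r' + m + 1))),
      I.card = r' + 2 → (∀ i ∈ I, x i ∈ V) → ω x = 0)
    (L : Submodule ℝ W) (hLV : L ≤ V)
    (hml : ∀ α : W [⋀^Fin (r' + m)]→ₗ[ℝ] ℝ,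
      (∃ v ∈ L, ∀ x : Fin (r' + m) → W, ω (Fin.cons v x) = α x)
        ↔ ((∀ (x : Fin (r' + m) → W) (i : Fin (r' + m)), x i ∈ L → α x = 0)
            ∧ ∀ (x : Fin (r' + m) → W) (I : Finset (Fin (r' + m))),
                I.card = r' + 1 → (∀ i ∈ I, x i ∈ V) → α x = 0)) :
    ∃ F : Submodule ℝ W,
      (∀ x : Fin (r' + m + 1) → W, (∀ i, x i ∈ F) → ω x = 0)
        ∧ Disjoint F L ∧ F ⊔ L = ⊤
        ∧ (∀ x : Fin (r' + m + 1) → W,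
            (∀ i : Fin (r' + m + 1), (i : ℕ) < r' + 1 → x i ∈ V ⊓ F) → ω x = 0)
        ∧ Disjoint (V ⊓ F) L ∧ (V ⊓ F) ⊔ L = V :=
  stmt17_general V ω hhor L hLV hml
end
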